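/- arXiv:2110.08900 — 11 statements merged into one kernel-verified Lean document; each statement's English description precedes it below -/
import Mathlib

section
/- Let m ≥ 1 be a natural number, let (a_i, b_i, c_i)_{i=1}^m be positive real numbers, and let Ĩ_0, Ĩ_1, …, Ĩ_m : (0,∞) → ℝ be functions such that for every i ∈ {1,…,m} and every y > 0 one has Ĩ_i(a_i·y) + b_i·Ĩ_i(y) = (1+b_i)·Ĩ_{i−1}(c_i·y). Then for every y > 0: ∏_{i=1}^m (1+b_i) · Ĩ_0(∏_{n=1}^m c_n · y) = Σ_{j=0}^{2^m−1} (∏_{i=1}^m b_i^{1−γ_{j,i}}) · Ĩ_m((∏_{k=1}^m a_k^{γ_{j,k}}) · y). (Forward direction of the key decomposition lemma in the proof of Theorem 3.1.) -/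
/-- The `i`-th binary digit of `j` (for `i ≥ 1`), i.e. `j = Σ_{i=1}^m γ_{j,i}·2^{i-1}`. -/
def gam (j i : ℕ) : ℕ := if Nat.testBit j (i - 1) then 1 else 0

lemma gam_add_pow {j m i : ℕ} (hi : 1 ≤ i) (him : i ≤ m) :
    gam (j + 2 ^ m) i = gam j i := by
  unfold gam
  rw [Nat.add_comm, Nat.testBit_two_pow_add_gt (by omega)]

lemma gam_low {j m : ℕ} (hj : j < 2 ^ m) : gam j (m + 1) = 0 := by
  unfold gam
  simp [Nat.testBit_lt_two_pow hj]

lemma gam_high {j m : ℕ} (hj : j < 2 ^ m) : gam (j + 2 ^ m) (m + 1) = 1 := by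
  unfold gam
  simp [Nat.add_comm j, Nat.testBit_two_pow_add_eq, Nat.testBit_lt_two_pow hj]

/-- Forward direction of the key decomposition lemma in the proof of Theorem 3.1. -/
theorem stmt0 (m : ℕ) (hm : 1 ≤ m) (a b c : ℕ → ℝ)
    (ha : ∀ i ∈ Finset.Icc 1 m, 0 < a i)
    (hb : ∀ i ∈ Finset.Icc 1 m, 0 < b i)
    (hc : ∀ i ∈ Finset.Icc 1 m, 0 < c i)
    (I : ℕ → ℝ → ℝ)
    (hI : ∀ i ∈ Finset.Icc 1 m, ∀ y > (0 : ℝ),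
      I i (a i * y) + b i * I i y = (1 + b i) * I (i - 1) (c i * y)) :
    ∀ y > (0 : ℝ),
      (∏ i ∈ Finset.Icc 1 m, (1 + b i)) * I 0 ((∏ n ∈ Finset.Icc 1 m, c n) * y)
        = ∑ j ∈ Finset.range (2 ^ m),
            (∏ i ∈ Finset.Icc 1 m, b i ^ (1 - gam j i)) *
              I m ((∏ k ∈ Finset.Icc 1 m, a k ^ gam j k) * y) := by
  induction m, hm using Nat.le_induction with
  | base =>
    intro y hy
    have h1 := hI 1 (by simp) y hy
    simp only [Finset.Icc_self, Finset.prod_singleton] at *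
    rw [show (2:ℕ)^1 = 2 from rfl, Finset.sum_range_succ, Finset.sum_range_one]
    have g0 : gam 0 1 = 0 := by simp [gam]
    have g1 : gam 1 1 = 1 := by simp [gam]
    rw [g0, g1]
    simp only [pow_zero, pow_one, one_mul] at *
    rw [← h1]; ring
  | succ m hm IH =>
    intro y hy
    have hsub : Finset.Icc 1 m ⊆ Finset.Icc 1 (m + 1) :=
      Finset.Icc_subset_Icc le_rfl (by omega)
    have IH' := IH (fun i hi => ha i (hsub hi)) (fun i hi => hb i (hsub hi))
      (fun i hi => hc i (hsub hi)) (fun i hi => hI i (hsub hi))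
    have hcm1 : 0 < c (m + 1) := hc _ (by simp)
    have IHy := IH' (c (m + 1) * y) (by positivity)
    have hprodIcc : ∀ f : ℕ → ℝ, ∏ i ∈ Finset.Icc 1 (m + 1), f i
        = (∏ i ∈ Finset.Icc 1 m, f i) * f (m + 1) := by
      intro f; rw [← Finset.prod_Icc_succ_top (by omega)]
    -- split the sum
    have hsplit : ∀ f : ℕ → ℝ, ∑ j ∈ Finset.range (2 ^ (m + 1)), f j
        = ∑ j ∈ Finset.range (2 ^ m), f j + ∑ j ∈ Finset.range (2 ^ m), f (j + 2 ^ m) := by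
      intro f
      rw [show 2 ^ (m + 1) = 2 ^ m + 2 ^ m by ring, Finset.sum_range_add]
      exact congrArg _ (Finset.sum_congr rfl fun x _ => by rw [Nat.add_comm])
    rw [hsplit, hprodIcc, hprodIcc c]
    have key : ∀ j ∈ Finset.range (2 ^ m),
        (∏ i ∈ Finset.Icc 1 (m+1), b i ^ (1 - gam j i)) *
            I (m+1) ((∏ k ∈ Finset.Icc 1 (m+1), a k ^ gam j k) * y)
          + (∏ i ∈ Finset.Icc 1 (m+1), b i ^ (1 - gam (j + 2^m) i)) *
            I (m+1) ((∏ k ∈ Finset.Icc 1 (m+1), a k ^ gam (j + 2^m) k) * y)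
        = (1 + b (m+1)) * ((∏ i ∈ Finset.Icc 1 m, b i ^ (1 - gam j i)) *
            I m ((∏ k ∈ Finset.Icc 1 m, a k ^ gam j k) * (c (m+1) * y))) := by
      intro j hj
      simp only [Finset.mem_range] at hj
      have e1 : ∀ k ∈ Finset.Icc 1 m, b k ^ (1 - gam (j + 2^m) k) = b k ^ (1 - gam j k) := by
        intro k hk; simp only [Finset.mem_Icc] at hk; rw [gam_add_pow hk.1 hk.2]
      have e2 : ∀ k ∈ Finset.Icc 1 m, a k ^ gam (j + 2^m) k = a k ^ gam j k := by
        intro k hk; simp only [Finset.mem_Icc] at hk; rw [gam_add_pow hk.1 hk.2]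
      rw [hprodIcc, hprodIcc, hprodIcc, hprodIcc,
        Finset.prod_congr rfl e1, Finset.prod_congr rfl e2,
        gam_low hj, gam_high hj]
      have hzpos : (0:ℝ) < (∏ k ∈ Finset.Icc 1 m, a k ^ gam j k) * y := by
        apply mul_pos _ hy
        exact Finset.prod_pos (fun k hk => pow_pos (ha k (hsub hk)) _)
      have hrec := hI (m+1) (by simp) _ hzpos
      simp only [Nat.add_sub_cancel] at hrec
      rw [show c (m+1) * ((∏ k ∈ Finset.Icc 1 m, a k ^ gam j k) * y)
          = (∏ k ∈ Finset.Icc 1 m, a k ^ gam j k) * (c (m+1) * y) by ring] at hrec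
      simp only [pow_zero, pow_one, tsub_self, mul_one, Nat.sub_zero]
      rw [show (∏ k ∈ Finset.Icc 1 m, a k ^ gam j k) * a (m+1) * y
          = a (m+1) * ((∏ k ∈ Finset.Icc 1 m, a k ^ gam j k) * y) by ring]
      linear_combination (∏ i ∈ Finset.Icc 1 m, b i ^ (1 - gam j i)) * hrec
    rw [← Finset.sum_add_distrib, Finset.sum_congr rfl key, ← Finset.mul_sum, ← IHy,
      mul_assoc (∏ i ∈ Finset.Icc 1 m, c i)]
    ring
end

section
/- Let k ≥ 1 be a natural number and let (a_i, b_i, c_i)_{i=1}^k be positive real numbers. Suppose I_0, Ĩ_k : (0,∞) → ℝ satisfy the k-step linear functional equation with coefficients (a_i, b_i, c_i)_{i=1}^k. Define Ĩ_{k−1} : (0,∞) → ℝ by Ĩ_{k−1}(y) := (1/(1+b_k))·(Ĩ_k(a_k·y/c_k) + b_k·Ĩ_k(y/c_k)). Then I_0 and Ĩ_{k−1} satisfy the (k−1)-step linear functional equation with coefficients (a_i, b_i, c_i)_{i=1}^{k−1} (for k = 1 this equation reads I_0(y) = Ĩ_0(y) for all y > 0). (Backward direction of the key decomposition lemma in the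 proof of Theorem 3.1.) -/
/-- `I` and `J` satisfy the `m`-step linear functional equation with
coefficients `(a_i, b_i, c_i)_{i=1}^m`. -/
def LFE (m : ℕ) (a b c : ℕ → ℝ) (I J : ℝ → ℝ) : Prop :=
  ∀ y > (0 : ℝ),
    (∏ i ∈ Finset.Icc 1 m, (1 + b i)) * I ((∏ n ∈ Finset.Icc 1 m, c n) * y)
      = ∑ j ∈ Finset.range (2 ^ m),
          (∏ i ∈ Finset.Icc 1 m, b i ^ (1 - gam j i)) *
            J ((∏ k ∈ Finset.Icc 1 m, a k ^ gam j k) * y)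

/-- Backward direction of the key decomposition lemma in the proof of Theorem 3.1. -/
theorem stmt1 (k : ℕ) (hk : 1 ≤ k) (a b c : ℕ → ℝ)
    (ha : ∀ i ∈ Finset.Icc 1 k, 0 < a i)
    (hb : ∀ i ∈ Finset.Icc 1 k, 0 < b i)
    (hc : ∀ i ∈ Finset.Icc 1 k, 0 < c i)
    (I0 Ik : ℝ → ℝ)
    (h : LFE k a b c I0 Ik) :
    LFE (k - 1) a b c I0
      (fun y => (1 / (1 + b k)) * (Ik (a k * y / c k) + b k * Ik (y / c k))) := by
  obtain ⟨m, rfl⟩ : ∃ m, k = m + 1 := ⟨k - 1, (Nat.succ_pred_eq_of_pos hk).symm⟩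
  simp only [Nat.add_sub_cancel]
  intro y hy
  have hbK : 0 < b (m + 1) := hb _ (by simp)
  have hcK : 0 < c (m + 1) := hc _ (by simp)
  have h1bK : (0 : ℝ) < 1 + b (m + 1) := by linarith
  have hy' : (0 : ℝ) < y / c (m + 1) := div_pos hy hcK
  have eq := h (y / c (m + 1)) hy'
  rw [Finset.prod_Icc_succ_top (Nat.le_add_left 1 m),
    Finset.prod_Icc_succ_top (Nat.le_add_left 1 m)] at eq
  have hcc : (∏ n ∈ Finset.Icc 1 m, c n) * c (m + 1) * (y / c (m + 1))
      = (∏ n ∈ Finset.Icc 1 m, c n) * y := by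
    field_simp
  rw [hcc, Nat.two_pow_succ, Finset.sum_range_add] at eq
  -- simplify the summands
  have key : ∀ j ∈ Finset.range (2 ^ m),
      (∏ i ∈ Finset.Icc 1 (m + 1), b i ^ (1 - gam j i)) *
          Ik ((∏ i ∈ Finset.Icc 1 (m + 1), a i ^ gam j i) * (y / c (m + 1)))
        + (∏ i ∈ Finset.Icc 1 (m + 1), b i ^ (1 - gam (2 ^ m + j) i)) *
          Ik ((∏ i ∈ Finset.Icc 1 (m + 1), a i ^ gam (2 ^ m + j) i) * (y / c (m + 1)))
      = (1 + b (m + 1)) * ((∏ i ∈ Finset.Icc 1 m, b i ^ (1 - gam j i)) *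
          ((1 / (1 + b (m + 1))) *
            (Ik (a (m + 1) * ((∏ i ∈ Finset.Icc 1 m, a i ^ gam j i) * y) / c (m + 1))
              + b (m + 1) *
                Ik ((∏ i ∈ Finset.Icc 1 m, a i ^ gam j i) * y / c (m + 1))))) := by
    intro j hj
    rw [Finset.mem_range] at hj
    have hgj : gam j (m + 1) = 0 := by
      simp [gam, Nat.testBit_eq_false_of_lt hj]
    have hgj2 : gam (2 ^ m + j) (m + 1) = 1 := by
      simp [gam, Nat.testBit_two_pow_add_eq, Nat.testBit_eq_false_of_lt hj]
    have hsame : ∀ i ∈ Finset.Icc 1 m, gam (2 ^ m + j) i = gam j i := by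
      intro i hi
      rw [Finset.mem_Icc] at hi
      have : i - 1 < m := by omega
      simp [gam, Nat.testBit_two_pow_add_gt this]
    have hb1 : (∏ i ∈ Finset.Icc 1 (m + 1), b i ^ (1 - gam j i))
        = (∏ i ∈ Finset.Icc 1 m, b i ^ (1 - gam j i)) * b (m + 1) := by
      rw [Finset.prod_Icc_succ_top (Nat.le_add_left 1 m), hgj, Nat.sub_zero, pow_one]
    have hb2 : (∏ i ∈ Finset.Icc 1 (m + 1), b i ^ (1 - gam (2 ^ m + j) i))
        = (∏ i ∈ Finset.Icc 1 m, b i ^ (1 - gam j i)) := by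
      rw [Finset.prod_Icc_succ_top (Nat.le_add_left 1 m), hgj2]
      rw [Nat.sub_self, pow_zero, mul_one]
      exact Finset.prod_congr rfl fun i hi => by rw [hsame i hi]
    have ha1 : (∏ i ∈ Finset.Icc 1 (m + 1), a i ^ gam j i)
        = (∏ i ∈ Finset.Icc 1 m, a i ^ gam j i) := by
      rw [Finset.prod_Icc_succ_top (Nat.le_add_left 1 m), hgj, pow_zero, mul_one]
    have ha2 : (∏ i ∈ Finset.Icc 1 (m + 1), a i ^ gam (2 ^ m + j) i)
        = (∏ i ∈ Finset.Icc 1 m, a i ^ gam j i) * a (m + 1) := by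
      rw [Finset.prod_Icc_succ_top (Nat.le_add_left 1 m), hgj2, pow_one]
      congr 1
      exact Finset.prod_congr rfl fun i hi => by rw [hsame i hi]
    rw [hb1, hb2, ha1, ha2]
    have harg1 : (∏ i ∈ Finset.Icc 1 m, a i ^ gam j i) * (y / c (m + 1))
        = (∏ i ∈ Finset.Icc 1 m, a i ^ gam j i) * y / c (m + 1) := by ring
    have harg2 : (∏ i ∈ Finset.Icc 1 m, a i ^ gam j i) * a (m + 1) * (y / c (m + 1))
        = a (m + 1) * ((∏ i ∈ Finset.Icc 1 m, a i ^ gam j i) * y) / c (m + 1) := by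
      ring
    rw [harg1, harg2]
    field_simp
    ring
  rw [← Finset.sum_add_distrib, Finset.sum_congr rfl key, ← Finset.mul_sum] at eq
  have goal := mul_left_cancel₀ h1bK.ne'
    (by rw [← eq]; ring :
      (1 + b (m + 1)) * ((∏ i ∈ Finset.Icc 1 m, (1 + b i)) *
        I0 ((∏ n ∈ Finset.Icc 1 m, c n) * y))
      = (1 + b (m + 1)) * ∑ j ∈ Finset.range (2 ^ m),
          (∏ i ∈ Finset.Icc 1 m, b i ^ (1 - gam j i)) *
            ((1 / (1 + b (m + 1))) *
              (Ik (a (m + 1) * ((∏ i ∈ Finset.Icc 1 m, a i ^ gam j i) * y) / c (m + 1))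
                + b (m + 1) *
                  Ik ((∏ i ∈ Finset.Icc 1 m, a i ^ gam j i) * y / c (m + 1)))))
  exact goal
end

section
/- Let m ≥ 1, let p_i, q_i ∈ (0,1) for i = 1,…,m, and let θ > 0. Define I_0(y) = y^{−θ} and I_m(y) = (∏_{i=1}^m δ_i)·y^{−θ} for y > 0, where δ_i = 1/(p_i^θ·q_i^{1−θ} + (1−p_i)^θ·(1−q_i)^{1−θ}). Then (I_0, I_m) satisfies the generalized integral equation of the binomial model with parameters (p_i, q_i)_{i=1}^m. (The inverse-marginal identity of Example 3.1 for CRRA initial data in the heterogeneous market.) -/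
/-- `I` and `J` satisfy the generalized integral equation of the binomial model
with parameters `(p_i, q_i)_{i=1}^m`. -/
def GIE (m : ℕ) (p q : ℕ → ℝ) (I J : ℝ → ℝ) : Prop :=
  ∀ y > (0 : ℝ),
    I y = ∑ j ∈ Finset.range (2 ^ m),
      (∏ i ∈ Finset.Icc 1 m, q i ^ gam j i * (1 - q i) ^ (1 - gam j i)) *
        J (y * ∏ i ∈ Finset.Icc 1 m,
            (q i ^ gam j i * (1 - q i) ^ (1 - gam j i)) /
              (p i ^ gam j i * (1 - p i) ^ (1 - gam j i)))

lemma sum_prod_gam (m : ℕ) (f : ℕ → ℕ → ℝ) :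
    ∑ j ∈ Finset.range (2 ^ m), ∏ i ∈ Finset.Icc 1 m, f i (gam j i)
      = ∏ i ∈ Finset.Icc 1 m, (f i 0 + f i 1) := by
  induction m with
  | zero => simp
  | succ m ih =>
    have hIcc : Finset.Icc 1 (m + 1) = insert (m + 1) (Finset.Icc 1 m) := by
      ext x; simp [Finset.mem_Icc]; omega
    have hnotmem : (m + 1) ∉ Finset.Icc 1 m := by simp
    have hsplit : (2 : ℕ) ^ (m + 1) = 2 ^ m + 2 ^ m := by ring
    rw [hsplit, Finset.range_add, Finset.sum_union]
    · rw [Finset.sum_map]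
      have h1 : ∀ j ∈ Finset.range (2 ^ m),
          ∏ i ∈ Finset.Icc 1 (m + 1), f i (gam j i)
            = f (m + 1) 0 * ∏ i ∈ Finset.Icc 1 m, f i (gam j i) := by
        intro j hj
        rw [hIcc, Finset.prod_insert hnotmem]
        congr 1
        have : gam j (m + 1) = 0 := by
          simp [gam, Nat.testBit_lt_two_pow (Finset.mem_range.mp hj)]
        rw [this]
      have h2 : ∀ j ∈ Finset.range (2 ^ m),
          ∏ i ∈ Finset.Icc 1 (m + 1), f i (gam (2 ^ m + j) i)
            = f (m + 1) 1 * ∏ i ∈ Finset.Icc 1 m, f i (gam j i) := by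
        intro j hj
        rw [hIcc, Finset.prod_insert hnotmem]
        have hb : gam (2 ^ m + j) (m + 1) = 1 := by
          simp [gam, Nat.testBit_two_pow_add_eq,
            Nat.testBit_lt_two_pow (Finset.mem_range.mp hj)]
        rw [hb]
        congr 1
        apply Finset.prod_congr rfl
        intro i hi
        have hi' : i - 1 < m := by
          have := Finset.mem_Icc.mp hi; omega
        simp [gam, Nat.testBit_two_pow_add_gt hi']
      have e1 : ∑ j ∈ Finset.range (2 ^ m), ∏ i ∈ Finset.Icc 1 (m + 1), f i (gam j i)
          = f (m + 1) 0 * ∑ j ∈ Finset.range (2 ^ m), ∏ i ∈ Finset.Icc 1 m, f i (gam j i) := by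
        rw [Finset.sum_congr rfl h1, ← Finset.mul_sum]
      have e2 : ∑ j ∈ Finset.range (2 ^ m),
            ∏ i ∈ Finset.Icc 1 (m + 1), f i (gam ((addLeftEmbedding (2 ^ m)) j) i)
          = f (m + 1) 1 * ∑ j ∈ Finset.range (2 ^ m), ∏ i ∈ Finset.Icc 1 m, f i (gam j i) := by
        simp only [addLeftEmbedding_apply]
        rw [Finset.sum_congr rfl h2, ← Finset.mul_sum]
      rw [e1, e2, ih, hIcc, Finset.prod_insert hnotmem]
      ring
    · simp [Finset.disjoint_left]
      intro a ha b hb hab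
      omega

lemma aux_rpow (a b θ : ℝ) (ha : 0 < a) (hb : 0 < b) :
    a * (a / b) ^ (-θ) = b ^ θ * a ^ (1 - θ) := by
  have h : (a / b) ^ (-θ) = a ^ (-θ) * b ^ θ := by
    rw [Real.div_rpow ha.le hb.le, Real.rpow_neg hb.le, div_eq_mul_inv, inv_inv]
  rw [h, show (1 : ℝ) - θ = 1 + (-θ) by ring, Real.rpow_add ha, Real.rpow_one]
  ring

/-- The inverse-marginal identity of Example 3.1 for CRRA initial data in the
heterogeneous market. -/
theorem stmt3 (m : ℕ) (hm : 1 ≤ m) (p q : ℕ → ℝ)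
    (hp : ∀ i ∈ Finset.Icc 1 m, p i ∈ Set.Ioo (0 : ℝ) 1)
    (hq : ∀ i ∈ Finset.Icc 1 m, q i ∈ Set.Ioo (0 : ℝ) 1)
    (θ : ℝ) (hθ : 0 < θ) :
    GIE m p q (fun y => y ^ (-θ))
      (fun y => (∏ i ∈ Finset.Icc 1 m,
          (p i ^ θ * q i ^ (1 - θ) + (1 - p i) ^ θ * (1 - q i) ^ (1 - θ))⁻¹) * y ^ (-θ)) := by
  intro y hy
  set C : ℝ := ∏ i ∈ Finset.Icc 1 m,
      (p i ^ θ * q i ^ (1 - θ) + (1 - p i) ^ θ * (1 - q i) ^ (1 - θ))⁻¹ with hC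
  have hqt : ∀ j, ∀ i ∈ Finset.Icc 1 m,
      0 < q i ^ gam j i * (1 - q i) ^ (1 - gam j i) := by
    intro j i hi
    have h1 := (hq i hi).1
    have h2 : 0 < 1 - q i := by linarith [(hq i hi).2]
    positivity
  have hpt : ∀ j, ∀ i ∈ Finset.Icc 1 m,
      0 < p i ^ gam j i * (1 - p i) ^ (1 - gam j i) := by
    intro j i hi
    have h1 := (hp i hi).1
    have h2 : 0 < 1 - p i := by linarith [(hp i hi).2]
    positivity
  set f : ℕ → ℕ → ℝ := fun i g =>
    (q i ^ g * (1 - q i) ^ (1 - g)) *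
      ((q i ^ g * (1 - q i) ^ (1 - g)) / (p i ^ g * (1 - p i) ^ (1 - g))) ^ (-θ) with hf
  have key : ∀ j ∈ Finset.range (2 ^ m),
      (∏ i ∈ Finset.Icc 1 m, q i ^ gam j i * (1 - q i) ^ (1 - gam j i)) *
        (C * (y * ∏ i ∈ Finset.Icc 1 m,
            (q i ^ gam j i * (1 - q i) ^ (1 - gam j i)) /
              (p i ^ gam j i * (1 - p i) ^ (1 - gam j i))) ^ (-θ))
        = C * y ^ (-θ) * ∏ i ∈ Finset.Icc 1 m, f i (gam j i) := by
    intro j _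
    have hrpos : ∀ i ∈ Finset.Icc 1 m,
        0 ≤ (q i ^ gam j i * (1 - q i) ^ (1 - gam j i)) /
          (p i ^ gam j i * (1 - p i) ^ (1 - gam j i)) :=
      fun i hi => (div_pos (hqt j i hi) (hpt j i hi)).le
    rw [Real.mul_rpow hy.le (Finset.prod_nonneg hrpos),
      ← Real.finset_prod_rpow _ _ hrpos]
    simp only [hf]
    conv_rhs => rw [Finset.prod_mul_distrib]
    ring
  rw [Finset.sum_congr rfl key, ← Finset.mul_sum, sum_prod_gam]
  have hprod : ∀ i ∈ Finset.Icc 1 m,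
      f i 0 + f i 1 = p i ^ θ * q i ^ (1 - θ) + (1 - p i) ^ θ * (1 - q i) ^ (1 - θ) := by
    intro i hi
    have hq1 := (hq i hi).1
    have hq2 : 0 < 1 - q i := by linarith [(hq i hi).2]
    have hp1 := (hp i hi).1
    have hp2 : 0 < 1 - p i := by linarith [(hp i hi).2]
    simp only [hf, pow_zero, pow_one, one_mul, mul_one, Nat.sub_self, Nat.sub_zero]
    rw [aux_rpow _ _ _ hq2 hp2, aux_rpow _ _ _ hq1 hp1]
    ring
  rw [Finset.prod_congr rfl hprod, hC]
  have hone : ∀ i ∈ Finset.Icc 1 m,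
      (p i ^ θ * q i ^ (1 - θ) + (1 - p i) ^ θ * (1 - q i) ^ (1 - θ))⁻¹ *
        (p i ^ θ * q i ^ (1 - θ) + (1 - p i) ^ θ * (1 - q i) ^ (1 - θ)) = 1 := by
    intro i hi
    have hq1 := (hq i hi).1
    have hq2 : 0 < 1 - q i := by linarith [(hq i hi).2]
    have hp1 := (hp i hi).1
    have hp2 : 0 < 1 - p i := by linarith [(hp i hi).2]
    have : 0 < p i ^ θ * q i ^ (1 - θ) + (1 - p i) ^ θ * (1 - q i) ^ (1 - θ) := by
      positivity
    field_simp
  have hone' : (∏ i ∈ Finset.Icc 1 m,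
      (p i ^ θ * q i ^ (1 - θ) + (1 - p i) ^ θ * (1 - q i) ^ (1 - θ))⁻¹) *
      ∏ i ∈ Finset.Icc 1 m,
      (p i ^ θ * q i ^ (1 - θ) + (1 - p i) ^ θ * (1 - q i) ^ (1 - θ)) = 1 := by
    rw [← Finset.prod_mul_distrib, Finset.prod_congr rfl hone, Finset.prod_const_one]
  rw [mul_right_comm, hone', one_mul]
end

section
/- Let a, b, c > 0, y > 0, i ≥ 1, I_0 : (0,∞) → ℝ, and let α, α′ ∈ {0,1}^i satisfy Σ_{k=1}^i α_k = Σ_{k=1}^i α′_k. For n ∈ ℕ^i write |n| = Σ_{k=1}^i n_k, B(α,n) = Σ_{k=1}^i n_k·(1−2α_k) and S(α,n) = Σ_{s=1}^i (n_s·(2α_s−1) + (α_s−1)). If the family (n ∈ ℕ^i) ↦ b^{B(α,n)}·|I_0(a^{S(α,n)}·c^i·y)| is summable, then the corresponding family for α′ is summable as well and Σ_{n∈ℕ^i} (−1)^{|n|}·b^{B(α,n)}·I_0(a^{S(α,n)}·c^i·y) = Σ_{n∈ℕ^i} (−1)^{|n|}·b^{B(α′,n)}·I_0(a^{S(α′,n)}·c^i·y);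 i.e., in the time-homogeneous case the multi-index series defining the forward inverse marginal depends on the selector sequence α only through the number A = Σ_k α_k of conditions of type (C1) satisfied. (The reduction underlying Corollary 3.4.) -/
/-- `|n| = Σ_k n_k` for a multi-index `n ∈ ℕ^i`. -/
def absN {i : ℕ} (n : Fin i → ℕ) : ℕ := ∑ k, n k

/-- `B(α,n) = Σ_{k=1}^i n_k·(1−2α_k)`. -/
def Bexp {i : ℕ} (α n : Fin i → ℕ) : ℤ := ∑ k, (n k : ℤ) * (1 - 2 * (α k : ℤ))

/-- `S(α,n) = Σ_{s=1}^i (n_s·(2α_s−1) + (α_s−1))`. -/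
def Sexp {i : ℕ} (α n : Fin i → ℕ) : ℤ :=
  ∑ k, ((n k : ℤ) * (2 * (α k : ℤ) - 1) + ((α k : ℤ) - 1))

lemma card_fiber_eq {i : ℕ} (α α' : Fin i → ℕ) (hα : ∀ k, α k ≤ 1) (hα' : ∀ k, α' k ≤ 1)
    (hsum : ∑ k, α k = ∑ k, α' k) (v : ℕ) :
    Fintype.card {k // α' k = v} = Fintype.card {k // α k = v} := by
  have key : ∀ (β : Fin i → ℕ), (∀ k, β k ≤ 1) →
      (Finset.univ.filter (fun k => β k = 1)).card = ∑ k, β k := by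
    intro β hβ
    rw [Finset.card_filter]
    refine Finset.sum_congr rfl fun k _ => ?_
    rcases Nat.le_one_iff_eq_zero_or_eq_one.mp (hβ k) with h | h <;> simp [h]
  have h1 : Fintype.card {k // α' k = 1} = Fintype.card {k // α k = 1} := by
    rw [Fintype.card_subtype, Fintype.card_subtype, key α hα, key α' hα', hsum]
  rcases v with _ | _ | v
  · -- v = 0
    have h0 : ∀ (β : Fin i → ℕ), (∀ k, β k ≤ 1) →
        Fintype.card {k // β k = 0} + Fintype.card {k // β k = 1} = i := by
      intro β hβ
      rw [Fintype.card_subtype, Fintype.card_subtype]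
      have : ∀ k : Fin i, β k = 0 ↔ ¬ β k = 1 := by
        intro k
        rcases Nat.le_one_iff_eq_zero_or_eq_one.mp (hβ k) with h | h <;> simp [h]
      simp only [this]
      rw [add_comm, Finset.card_filter_add_card_filter_not (fun k => β k = 1)]
      simp
    have hA := h0 α hα
    have hA' := h0 α' hα'
    omega
  · exact h1
  · -- v ≥ 2
    have e1 : Fintype.card {k // α' k = v + 2} = 0 := by
      rw [Fintype.card_eq_zero_iff]
      exact ⟨fun ⟨k, hk⟩ => by have := hα' k; omega⟩
    have e2 : Fintype.card {k // α k = v + 2} = 0 := by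
      rw [Fintype.card_eq_zero_iff]
      exact ⟨fun ⟨k, hk⟩ => by have := hα k; omega⟩
    rw [e1, e2]

lemma exists_perm {i : ℕ} (α α' : Fin i → ℕ) (hα : ∀ k, α k ≤ 1) (hα' : ∀ k, α' k ≤ 1)
    (hsum : ∑ k, α k = ∑ k, α' k) :
    ∃ σ : Equiv.Perm (Fin i), ∀ k, α' k = α (σ k) := by
  have e : ∀ v, {k // α' k = v} ≃ {k // α k = v} := fun v =>
    Fintype.equivOfCardEq (card_fiber_eq α α' hα hα' hsum v)
  exact ⟨Equiv.ofFiberEquiv e, fun k => (Equiv.ofFiberEquiv_map e k).symm⟩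


/-- In the time-homogeneous case, the multi-index series defining the forward inverse
marginal depends on the selector sequence `α` only through `A = Σ_k α_k`.
(The reduction underlying Corollary 3.4.) -/
theorem stmt6 (a b c y : ℝ) (ha : 0 < a) (hb : 0 < b) (hc : 0 < c) (hy : 0 < y)
    (i : ℕ) (hi : 1 ≤ i) (I0 : ℝ → ℝ)
    (α α' : Fin i → ℕ) (hα : ∀ k, α k ≤ 1) (hα' : ∀ k, α' k ≤ 1)
    (hsum : ∑ k, α k = ∑ k, α' k)
    (hsummable : Summable (fun n : Fin i → ℕ =>
      b ^ Bexp α n * |I0 (a ^ Sexp α n * c ^ i * y)|)) :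
    Summable (fun n : Fin i → ℕ =>
      b ^ Bexp α' n * |I0 (a ^ Sexp α' n * c ^ i * y)|) ∧
    ∑' n : Fin i → ℕ, (-1 : ℝ) ^ absN n * b ^ Bexp α n * I0 (a ^ Sexp α n * c ^ i * y)
      = ∑' n : Fin i → ℕ,
          (-1 : ℝ) ^ absN n * b ^ Bexp α' n * I0 (a ^ Sexp α' n * c ^ i * y) := by
  obtain ⟨σ, hσ⟩ := exists_perm α α' hα hα' hsum
  let e : (Fin i → ℕ) ≃ (Fin i → ℕ) :=
    ⟨fun n => n ∘ σ.symm, fun n => n ∘ σ, fun n => by ext k; simp, fun n => by ext k; simp⟩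
  have habs : ∀ n : Fin i → ℕ, absN (e n) = absN n := by
    intro n
    exact Fintype.sum_equiv σ.symm _ _ (fun k => by simp [e, absN])
  have hB : ∀ n : Fin i → ℕ, Bexp α (e n) = Bexp α' n := by
    intro n
    exact (Fintype.sum_equiv σ (fun k => (n k : ℤ) * (1 - 2 * (α' k : ℤ)))
      (fun k => ((e n) k : ℤ) * (1 - 2 * (α k : ℤ))) (fun k => by simp [e, hσ k])).symm
  have hS : ∀ n : Fin i → ℕ, Sexp α (e n) = Sexp α' n := by
    intro n
    exact (Fintype.sum_equiv σ
      (fun k => (n k : ℤ) * (2 * (α' k : ℤ) - 1) + ((α' k : ℤ) - 1))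
      (fun k => ((e n) k : ℤ) * (2 * (α k : ℤ) - 1) + ((α k : ℤ) - 1))
      (fun k => by simp [e, hσ k])).symm
  constructor
  · have : (fun n : Fin i → ℕ => b ^ Bexp α' n * |I0 (a ^ Sexp α' n * c ^ i * y)|)
        = (fun n : Fin i → ℕ => b ^ Bexp α n * |I0 (a ^ Sexp α n * c ^ i * y)|) ∘ e := by
      funext n
      simp only [Function.comp_apply, hB n, hS n]
    rw [this]
    exact (Equiv.summable_iff e).mpr hsummable
  · rw [← e.tsum_eq]
    congr 1
    funext n
    simp only [habs n, hB n, hS n]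
end

section
/- Let θ > 1 and C₁, C₂ > 0. Then f is strictly increasing on (0,1], strictly decreasing on [1,∞), f(1) = (C₁ + C₂)^{1−1/θ}, and consequently f(t) ≤ (C₁ + C₂)^{1−1/θ} for all t > 0, with equality if and only if t = 1. (The unimodality of the per-period performance factor established in the proof of Proposition 4.1 for θ > 1.) -/
/-- The per-period performance factor `f(t) = C₁·(C₁ + t⁻¹C₂)^{−1/θ} + C₂·(tC₁ + C₂)^{−1/θ}`. -/
noncomputable def f (θ C1 C2 t : ℝ) : ℝ :=
  C1 * (C1 + t⁻¹ * C2) ^ (-(1 / θ)) + C2 * (t * C1 + C2) ^ (-(1 / θ))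

section Aux

variable {θ C1 C2 : ℝ}

private lemma f_eq (hC2 : 0 < C2) {t : ℝ} (ht : 0 < t) (hC1 : 0 < C1) :
    f θ C1 C2 t = (C1 * t ^ (1 / θ) + C2) * (t * C1 + C2) ^ (-(1 / θ)) := by
  have hpos : (0:ℝ) < t * C1 + C2 := by positivity
  have h1 : C1 + t⁻¹ * C2 = t⁻¹ * (t * C1 + C2) := by field_simp
  have h2 : (t⁻¹ * (t * C1 + C2)) ^ (-(1/θ)) = t ^ (1/θ) * (t * C1 + C2) ^ (-(1/θ)) := by
    rw [Real.mul_rpow (by positivity) hpos.le, Real.inv_rpow ht.le,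
      ← Real.rpow_neg ht.le, neg_neg]
  rw [f, h1, h2]; ring

private lemma hasDerivAt_g (hθ : 1 < θ) (hC1 : 0 < C1) (hC2 : 0 < C2) {x : ℝ} (hx : 0 < x) :
    HasDerivAt (fun t : ℝ => (C1 * t ^ (1 / θ) + C2) * (t * C1 + C2) ^ (-(1 / θ)))
      ((1/θ) * C1 * C2 * (x * C1 + C2) ^ (-(1/θ) - 1) * (x ^ (1/θ - 1) - 1)) x := by
  have hpos : (0:ℝ) < x * C1 + C2 := by positivity
  have h1 : HasDerivAt (fun t : ℝ => C1 * t ^ (1/θ) + C2)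
      (C1 * ((1/θ) * x ^ (1/θ - 1))) x :=
    ((Real.hasDerivAt_rpow_const (Or.inl hx.ne')).const_mul C1).add_const C2
  have h2 : HasDerivAt (fun t : ℝ => t * C1 + C2) C1 x := by
    simpa using (hasDerivAt_mul_const (c := C1) (x := x)).add_const C2
  have h3 : HasDerivAt (fun y : ℝ => y ^ (-(1/θ)))
      (-(1/θ) * (x * C1 + C2) ^ (-(1/θ) - 1)) (x * C1 + C2) :=
    Real.hasDerivAt_rpow_const (Or.inl hpos.ne')
  have h4 := h3.comp x h2
  have h := h1.mul h4
  convert h using 1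
  case e'_4 => rfl
  case e'_5 => rfl
  case e'_8 => rfl
  have e1 : (x * C1 + C2) ^ (-(1/θ)) = (x * C1 + C2) ^ (-(1/θ) - 1) * (x * C1 + C2) := by
    rw [← Real.rpow_add_one hpos.ne']; ring_nf
  have e2 : x ^ (1/θ - 1) * x = x ^ (1/θ) := by
    rw [← Real.rpow_add_one hx.ne']; ring_nf
  simp only [Function.comp] at *
  rw [e1]
  linear_combination (-((1/θ) * C1 * C1 * (x * C1 + C2) ^ (-(1/θ) - 1))) * e2

private lemma g_strictMono (hθ : 1 < θ) (hC1 : 0 < C1) (hC2 : 0 < C2) :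
    StrictMonoOn (fun t : ℝ => (C1 * t ^ (1 / θ) + C2) * (t * C1 + C2) ^ (-(1 / θ)))
      (Set.Ioc 0 1) := by
  have hθ0 : (0:ℝ) < 1/θ := by positivity
  apply strictMonoOn_of_deriv_pos (convex_Ioc 0 1)
  · intro x hx
    exact (hasDerivAt_g hθ hC1 hC2 hx.1).continuousAt.continuousWithinAt
  · intro x hx
    rw [interior_Ioc] at hx
    rw [(hasDerivAt_g hθ hC1 hC2 hx.1).deriv]
    have h1 : 1 < x ^ (1/θ - 1) := by
      rw [Real.one_lt_rpow_iff_of_pos hx.1]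
      exact Or.inr ⟨hx.2, by linarith [one_div_pos.mpr (lt_trans one_pos hθ), (div_lt_one (lt_trans one_pos hθ)).mpr hθ]⟩
    have hx0 : (0:ℝ) < x := hx.1
    have hp : (0:ℝ) < x * C1 + C2 := by positivity
    have hB : (0:ℝ) < (x * C1 + C2) ^ (-(1/θ) - 1) := Real.rpow_pos_of_pos hp _
    have hg : (0:ℝ) < x ^ (1/θ - 1) - 1 := by linarith
    have hpre : (0:ℝ) < (1/θ) * C1 * C2 * (x * C1 + C2) ^ (-(1/θ) - 1) :=
      mul_pos (by positivity) hB
    exact mul_pos hpre hg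

private lemma g_strictAnti (hθ : 1 < θ) (hC1 : 0 < C1) (hC2 : 0 < C2) :
    StrictAntiOn (fun t : ℝ => (C1 * t ^ (1 / θ) + C2) * (t * C1 + C2) ^ (-(1 / θ)))
      (Set.Ici 1) := by
  apply strictAntiOn_of_deriv_neg (convex_Ici 1)
  · intro x hx
    have hx0 : (0:ℝ) < x := lt_of_lt_of_le one_pos hx
    exact (hasDerivAt_g hθ hC1 hC2 hx0).continuousAt.continuousWithinAt
  · intro x hx
    rw [interior_Ici] at hx
    have hx0 : (0:ℝ) < x := lt_trans one_pos hx
    rw [(hasDerivAt_g hθ hC1 hC2 hx0).deriv]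
    have h1 : x ^ (1/θ - 1) < 1 := by
      rw [Real.rpow_lt_one_iff_of_pos hx0]
      left
      exact ⟨hx, by linarith [(div_lt_one (lt_trans one_pos hθ)).mpr hθ]⟩
    have hp : (0:ℝ) < x * C1 + C2 := by positivity
    have hB : (0:ℝ) < (x * C1 + C2) ^ (-(1/θ) - 1) := Real.rpow_pos_of_pos hp _
    have hneg : x ^ (1/θ - 1) - 1 < 0 := by linarith
    have hpre : (0:ℝ) < (1/θ) * C1 * C2 * (x * C1 + C2) ^ (-(1/θ) - 1) :=
      mul_pos (by positivity) hB
    exact mul_neg_of_pos_of_neg hpre hneg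

end Aux

/-- The unimodality of the per-period performance factor established in the proof of
Proposition 4.1 for `θ > 1`. -/
theorem stmt9 (θ C1 C2 : ℝ) (hθ : 1 < θ) (hC1 : 0 < C1) (hC2 : 0 < C2) :
    StrictMonoOn (f θ C1 C2) (Set.Ioc 0 1) ∧
    StrictAntiOn (f θ C1 C2) (Set.Ici 1) ∧
    f θ C1 C2 1 = (C1 + C2) ^ (1 - 1 / θ) ∧
    ∀ t > (0 : ℝ),
      f θ C1 C2 t ≤ (C1 + C2) ^ (1 - 1 / θ) ∧
      (f θ C1 C2 t = (C1 + C2) ^ (1 - 1 / θ) ↔ t = 1) := by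
  have hmono : StrictMonoOn (f θ C1 C2) (Set.Ioc 0 1) := by
    intro a ha b hb hab
    rw [f_eq hC2 ha.1 hC1, f_eq hC2 hb.1 hC1]
    exact g_strictMono hθ hC1 hC2 ha hb hab
  have hanti : StrictAntiOn (f θ C1 C2) (Set.Ici 1) := by
    intro a ha b hb hab
    rw [f_eq hC2 (lt_of_lt_of_le one_pos ha) hC1, f_eq hC2 (lt_of_lt_of_le one_pos hb) hC1]
    exact g_strictAnti hθ hC1 hC2 ha hb hab
  have hone : f θ C1 C2 1 = (C1 + C2) ^ (1 - 1 / θ) := by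
    have hpos : (0:ℝ) < C1 + C2 := by positivity
    rw [f]
    simp only [inv_one, one_mul]
    rw [show (1:ℝ) - 1/θ = 1 + -(1/θ) by ring, Real.rpow_add hpos, Real.rpow_one]
    ring
  refine ⟨hmono, hanti, hone, fun t ht => ?_⟩
  have h1Ioc : (1:ℝ) ∈ Set.Ioc (0:ℝ) 1 := ⟨one_pos, le_refl 1⟩
  have key : t ≠ 1 → f θ C1 C2 t < (C1 + C2) ^ (1 - 1/θ) := by
    intro hne
    rcases lt_or_gt_of_ne hne with h | h
    · rw [← hone]; exact hmono ⟨ht, h.le⟩ h1Ioc h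
    · rw [← hone]; exact hanti (Set.mem_Ici.mpr (le_refl 1)) h.le h
  constructor
  · by_cases h : t = 1
    · rw [h, hone]
    · exact (key h).le
  · constructor
    · intro heq
      by_contra h
      exact absurd heq (ne_of_lt (key h))
    · intro h; rw [h, hone]
end

section
/- Let 0 < θ < 1 and C₁, C₂ > 0. Then f is strictly decreasing on (0,1], strictly increasing on [1,∞), f(1) = (C₁ + C₂)^{1−1/θ}, and consequently f(t) ≥ (C₁ + C₂)^{1−1/θ} for all t > 0, with equality if and only if t = 1. (The analogue of the unimodality argument in the proof of Proposition 4.1 for the case 0 < θ < 1.) -/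
lemma f_hasDerivAt (θ C1 C2 : ℝ) (hθ0 : 0 < θ) (hC1 : 0 < C1) (hC2 : 0 < C2)
    {t : ℝ} (ht : 0 < t) :
    HasDerivAt (f θ C1 C2)
      ((1/θ) * C1 * C2 * (t * C1 + C2) ^ (-(1/θ) - 1) * (t ^ (1/θ - 1) - 1)) t := by
  have htne : t ≠ 0 := ht.ne'
  have hden : 0 < t * C1 + C2 := by positivity
  have hinner : 0 < C1 + t⁻¹ * C2 := by positivity
  have h1 : HasDerivAt (fun s : ℝ => C1 + s⁻¹ * C2) (-(t^2)⁻¹ * C2) t := by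
    have := (hasDerivAt_inv htne).mul_const C2
    simpa using this.const_add C1
  have h2 : HasDerivAt (fun s : ℝ => s * C1 + C2) C1 t := by
    simpa using ((hasDerivAt_id t).mul_const C1).add_const C2
  have h3 := h1.rpow_const (p := -(1/θ)) (Or.inl hinner.ne')
  have h4 := h2.rpow_const (p := -(1/θ)) (Or.inl hden.ne')
  have h5 := (h3.const_mul C1).add (h4.const_mul C2)
  have h6 : HasDerivAt (f θ C1 C2)
      (C1 * (-(t^2)⁻¹ * C2 * (-(1/θ)) * (C1 + t⁻¹ * C2) ^ (-(1/θ) - 1)) +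
       C2 * (C1 * (-(1/θ)) * (t * C1 + C2) ^ (-(1/θ) - 1))) t := h5
  convert h6 using 1
  set P : ℝ := -(1/θ) - 1 with hP
  have key : C1 + t⁻¹ * C2 = t⁻¹ * (t * C1 + C2) := by
    field_simp
  have e1 : (C1 + t⁻¹ * C2) ^ P = t ^ (-P) * (t * C1 + C2) ^ P := by
    rw [key, Real.mul_rpow (by positivity) hden.le, Real.inv_rpow ht.le,
      ← Real.rpow_neg ht.le]
  have e2 : (t^2)⁻¹ * t ^ (-P) = t ^ (1/θ - 1) := by
    have h2r : (t : ℝ)^2 = t ^ (2:ℝ) := by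
      rw [← Real.rpow_natCast t 2]; norm_num
    rw [h2r, ← Real.rpow_neg ht.le, ← Real.rpow_add ht]
    congr 1
    rw [hP]; ring
  rw [e1]
  have : C1 * (-(t ^ 2)⁻¹ * C2 * (-(1 / θ)) * (t ^ (-P) * (t * C1 + C2) ^ P))
      = (1/θ) * C1 * C2 * (t * C1 + C2) ^ P * ((t^2)⁻¹ * t ^ (-P)) := by ring
  rw [this, e2]
  ring

/-- The analogue of the unimodality argument in the proof of Proposition 4.1 for the
case `0 < θ < 1`. -/
theorem stmt10 (θ C1 C2 : ℝ) (hθ0 : 0 < θ) (hθ1 : θ < 1) (hC1 : 0 < C1) (hC2 : 0 < C2) :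
    StrictAntiOn (f θ C1 C2) (Set.Ioc 0 1) ∧
    StrictMonoOn (f θ C1 C2) (Set.Ici 1) ∧
    f θ C1 C2 1 = (C1 + C2) ^ (1 - 1 / θ) ∧
    ∀ t > (0 : ℝ),
      (C1 + C2) ^ (1 - 1 / θ) ≤ f θ C1 C2 t ∧
      (f θ C1 C2 t = (C1 + C2) ^ (1 - 1 / θ) ↔ t = 1) := by
  have hexp : 0 < 1/θ - 1 := by
    have h1θ : 1 < 1/θ := by
      rw [lt_div_iff₀ hθ0]; linarith
    linarith
  have hcont : ∀ t : ℝ, 0 < t → ContinuousAt (f θ C1 C2) t := fun t ht =>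
    (f_hasDerivAt θ C1 C2 hθ0 hC1 hC2 ht).differentiableAt.continuousAt
  have hanti : StrictAntiOn (f θ C1 C2) (Set.Ioc 0 1) := by
    apply strictAntiOn_of_deriv_neg (convex_Ioc 0 1)
    · exact fun t ht => (hcont t ht.1).continuousWithinAt
    · intro t ht
      rw [interior_Ioc] at ht
      have ht0 : 0 < t := ht.1
      rw [(f_hasDerivAt θ C1 C2 hθ0 hC1 hC2 ht0).deriv]
      have hA : 0 < (t * C1 + C2) ^ (-(1/θ) - 1) :=
        Real.rpow_pos_of_pos (by positivity) _
      have hT : t ^ (1/θ - 1) < 1 := Real.rpow_lt_one ht.1.le ht.2 hexp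
      have hpos : 0 < (1/θ) * C1 * C2 * (t * C1 + C2) ^ (-(1/θ) - 1) := by positivity
      exact mul_neg_of_pos_of_neg hpos (by linarith)
  have hmono : StrictMonoOn (f θ C1 C2) (Set.Ici 1) := by
    apply strictMonoOn_of_deriv_pos (convex_Ici 1)
    · exact fun t ht => (hcont t (lt_of_lt_of_le one_pos ht)).continuousWithinAt
    · intro t ht
      rw [interior_Ici] at ht
      have ht0 : 0 < t := lt_trans one_pos ht
      rw [(f_hasDerivAt θ C1 C2 hθ0 hC1 hC2 ht0).deriv]
      have hA : 0 < (t * C1 + C2) ^ (-(1/θ) - 1) :=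
        Real.rpow_pos_of_pos (by positivity) _
      have hT : 1 < t ^ (1/θ - 1) :=
        (Real.one_lt_rpow_iff_of_pos ht0).mpr (Or.inl ⟨ht, hexp⟩)
      have hpos : 0 < (1/θ) * C1 * C2 * (t * C1 + C2) ^ (-(1/θ) - 1) := by positivity
      exact mul_pos hpos (by linarith)
  have hf1 : f θ C1 C2 1 = (C1 + C2) ^ (1 - 1 / θ) := by
    have hpos : (0:ℝ) < C1 + C2 := by positivity
    have : (C1 + C2) ^ (1 - 1/θ) = (C1 + C2) ^ (1:ℝ) * (C1 + C2) ^ (-(1/θ)) := by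
      rw [← Real.rpow_add hpos]; ring_nf
    rw [this, Real.rpow_one]
    simp [f]
    ring
  refine ⟨hanti, hmono, hf1, fun t ht => ?_⟩
  rcases lt_trichotomy t 1 with h | h | h
  · have hlt : f θ C1 C2 1 < f θ C1 C2 t :=
      hanti ⟨ht, h.le⟩ ⟨one_pos, le_refl 1⟩ h
    rw [hf1] at hlt
    exact ⟨hlt.le, by constructor <;> intro h' <;> [exact absurd h'.symm hlt.ne; exact absurd h' h.ne]⟩
  · subst h
    exact ⟨hf1.ge, by simp [hf1]⟩
  · have hlt : f θ C1 C2 1 < f θ C1 C2 t :=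
      hmono (Set.self_mem_Ici) h.le h
    rw [hf1] at hlt
    exact ⟨hlt.le, by constructor <;> intro h' <;> [exact absurd h'.symm hlt.ne; exact absurd h' h.ne']⟩
end

section
/- Let θ > 1, C₁, C₂ > 0, and 0 < t₁ ≤ t ≤ t₂. Then f(t) ≥ min{f(t₁), f(t₂)}; i.e., the minimum of the unimodal function f over any compact subinterval of (0,∞) is attained at one of the endpoints. (The endpoint minimization used to obtain the lower bound in Proposition 4.1.) -/
lemma hasDerivAt_f (θ C1 C2 : ℝ) (hC1 : 0 < C1) (hC2 : 0 < C2) {x : ℝ} (hx : 0 < x) :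
    HasDerivAt (f θ C1 C2)
      ((-(1 / θ)) * C1 * C2 * (x * C1 + C2) ^ (-(1 / θ) - 1) * (1 - x ^ (1 / θ - 1))) x := by
  have hA : 0 < C1 + x⁻¹ * C2 := by positivity
  have hB : 0 < x * C1 + C2 := by positivity
  have h1 : HasDerivAt (fun t : ℝ => C1 + t⁻¹ * C2) (-(x ^ 2)⁻¹ * C2) x :=
    ((hasDerivAt_inv hx.ne').mul_const C2).const_add C1
  have h2 : HasDerivAt (fun t : ℝ => t * C1 + C2) C1 x := by
    simpa using ((hasDerivAt_id x).mul_const C1).add_const C2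
  have ha := (h1.rpow_const (p := -(1 / θ)) (Or.inl hA.ne')).const_mul C1
  have hb := (h2.rpow_const (p := -(1 / θ)) (Or.inl hB.ne')).const_mul C2
  have := ha.add hb
  convert this using 1
  case e'_4 => rfl
  case e'_5 => rfl
  case e'_8 => rfl
  have hAB : C1 + x⁻¹ * C2 = (x * C1 + C2) / x := by field_simp
  have key : (C1 + x⁻¹ * C2) ^ (-(1 / θ) - 1)
      = (x * C1 + C2) ^ (-(1 / θ) - 1) / x ^ (-(1 / θ) - 1) := by
    rw [hAB, Real.div_rpow hB.le hx.le]
  have hinv : (x ^ 2)⁻¹ = x ^ (1 / θ - 1) * x ^ (-(1 / θ) - 1) := by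
    rw [← Real.rpow_add hx, show (1 / θ - 1) + (-(1 / θ) - 1) = (-2 : ℝ) by ring,
      Real.rpow_neg hx.le, Real.rpow_two]
  have hQ : x ^ (-(1 / θ) - 1) ≠ 0 := (Real.rpow_pos_of_pos hx _).ne'
  rw [key, hinv]
  field_simp
  ring_nf

/-- The endpoint minimization used to obtain the lower bound in Proposition 4.1. -/
theorem stmt11 (θ C1 C2 : ℝ) (hθ : 1 < θ) (hC1 : 0 < C1) (hC2 : 0 < C2)
    (t₁ t t₂ : ℝ) (ht₁ : 0 < t₁) (h1 : t₁ ≤ t) (h2 : t ≤ t₂) :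
    min (f θ C1 C2 t₁) (f θ C1 C2 t₂) ≤ f θ C1 C2 t := by
  have hθ0 : 0 < θ := lt_trans one_pos hθ
  -- derivative sign facts
  have hcont : ∀ {a b : ℝ}, 0 < a → ContinuousOn (f θ C1 C2) (Set.Icc a b) := by
    intro a b ha
    intro x hx
    have hx0 : 0 < x := lt_of_lt_of_le ha hx.1
    exact (hasDerivAt_f θ C1 C2 hC1 hC2 hx0).continuousAt.continuousWithinAt
  have hmono : ∀ {a b : ℝ}, 0 < a → b ≤ 1 → MonotoneOn (f θ C1 C2) (Set.Icc a b) := by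
    intro a b ha hb1
    apply monotoneOn_of_deriv_nonneg (convex_Icc a b) (hcont ha)
    · intro x hx
      rw [interior_Icc] at hx
      have hx0 : 0 < x := lt_trans ha hx.1
      exact ((hasDerivAt_f θ C1 C2 hC1 hC2 hx0).differentiableAt).differentiableWithinAt
    · intro x hx
      rw [interior_Icc] at hx
      have hx0 : 0 < x := lt_trans ha hx.1
      have hx1 : x < 1 := lt_of_lt_of_le hx.2 hb1
      rw [(hasDerivAt_f θ C1 C2 hC1 hC2 hx0).deriv]
      have hgt : 1 < x ^ (1 / θ - 1) := by
        have : x ^ (1 / θ - 1) > x ^ (0 : ℝ) := by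
          apply Real.rpow_lt_rpow_of_exponent_gt hx0 hx1
          have : 1 / θ < 1 := by rw [div_lt_one hθ0]; exact hθ
          linarith
        simpa using this
      have hBpos : (0:ℝ) < (x * C1 + C2) ^ (-(1 / θ) - 1) :=
        Real.rpow_pos_of_pos (by positivity) _
      have h1θ : 0 < 1 / θ := by positivity
      nlinarith [mul_nonneg (mul_pos (mul_pos (mul_pos h1θ hC1) hC2) hBpos).le
        (by linarith : (0:ℝ) ≤ x ^ (1 / θ - 1) - 1)]
  have hanti : ∀ {a b : ℝ}, 1 ≤ a → AntitoneOn (f θ C1 C2) (Set.Icc a b) := by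
    intro a b ha
    apply antitoneOn_of_deriv_nonpos (convex_Icc a b) (hcont (lt_of_lt_of_le one_pos ha))
    · intro x hx
      rw [interior_Icc] at hx
      have hx0 : 0 < x := lt_trans (lt_of_lt_of_le one_pos ha) hx.1
      exact ((hasDerivAt_f θ C1 C2 hC1 hC2 hx0).differentiableAt).differentiableWithinAt
    · intro x hx
      rw [interior_Icc] at hx
      have hx1 : 1 < x := lt_of_le_of_lt ha hx.1
      have hx0 : 0 < x := lt_trans one_pos hx1
      rw [(hasDerivAt_f θ C1 C2 hC1 hC2 hx0).deriv]
      have hlt : x ^ (1 / θ - 1) < 1 := by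
        have : x ^ (1 / θ - 1) < x ^ (0 : ℝ) := by
          apply Real.rpow_lt_rpow_of_exponent_lt hx1
          have : 1 / θ < 1 := by rw [div_lt_one hθ0]; exact hθ
          linarith
        simpa using this
      have hBpos : (0:ℝ) < (x * C1 + C2) ^ (-(1 / θ) - 1) :=
        Real.rpow_pos_of_pos (by positivity) _
      have h1θ : 0 < 1 / θ := by positivity
      nlinarith [mul_nonneg (mul_pos (mul_pos (mul_pos h1θ hC1) hC2) hBpos).le
        (by linarith : (0:ℝ) ≤ 1 - x ^ (1 / θ - 1))]
  rcases le_or_gt t 1 with ht | ht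
  · calc min (f θ C1 C2 t₁) (f θ C1 C2 t₂) ≤ f θ C1 C2 t₁ := min_le_left _ _
      _ ≤ f θ C1 C2 t := hmono ht₁ ht (Set.mem_Icc.2 ⟨le_refl t₁, h1⟩) (Set.mem_Icc.2 ⟨h1, le_refl t⟩) h1
  · calc min (f θ C1 C2 t₁) (f θ C1 C2 t₂) ≤ f θ C1 C2 t₂ := min_le_right _ _
      _ ≤ f θ C1 C2 t := hanti ht.le (Set.mem_Icc.2 ⟨le_refl t, h2⟩) (Set.mem_Icc.2 ⟨h2, le_refl t₂⟩) h2
end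

section
/- Let θ > 1, p, q ∈ (0,1), C₁ = p^θ·q^{1−θ}, C₂ = (1−p)^θ·(1−q)^{1−θ}, δ = 1/(C₁ + C₂), and t(D) = (D·(1−p)/(1−D·p))^θ for D ∈ (0, 1/p). Let m ≥ 1 and for each j = 1,…,m let 0 < D_{j,d} ≤ 1 ≤ D_{j,u} < 1/p and D_j ∈ [D_{j,d}, D_{j,u}]. Set f_j = min{f(t(D_{j,u})), f(t(D_{j,d}))}. Then δ^{m(1−1/θ)}·∏_{j=1}^m f_j ≤ ∏_{j=1}^m δ^{1−1/θ}·f(t(D_j)) ≤ 1. (The deterministic product estimate that yields the bounds on the minimal expected performance in Proposition 4.1.) -/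
/-- `t(D) = (D·(1−p)/(1−D·p))^θ`. -/
noncomputable def tD (p θ D : ℝ) : ℝ := (D * (1 - p) / (1 - D * p)) ^ θ

/-- Simplified form of `f`. -/
noncomputable def Faux (θ C1 C2 t : ℝ) : ℝ :=
  (C1 * t ^ (1/θ) + C2) * (C1 * t + C2) ^ (-(1/θ))

lemma hasDerivFaux {θ C1 C2 : ℝ} (hC1 : 0 < C1) (hC2 : 0 < C2) {t : ℝ} (ht : 0 < t) :
    HasDerivAt (Faux θ C1 C2)
      (C1 * C2 / θ * (C1 * t + C2) ^ (-(1/θ) - 1) * (t ^ (1/θ - 1) - 1)) t := by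
  have hpos : 0 < C1 * t + C2 := by positivity
  have h1 : HasDerivAt (fun x : ℝ => C1 * x ^ (1/θ) + C2)
      (C1 * ((1/θ) * t ^ (1/θ - 1))) t :=
    ((Real.hasDerivAt_rpow_const (Or.inl ht.ne')).const_mul C1).add_const C2
  have h2 : HasDerivAt (fun x : ℝ => C1 * x + C2) C1 t := by
    simpa using ((hasDerivAt_id t).const_mul C1).add_const C2
  have h3 : HasDerivAt (fun x : ℝ => (C1 * x + C2) ^ (-(1/θ)))
      ((-(1/θ) * (C1 * t + C2) ^ (-(1/θ) - 1)) * C1) t :=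
    by have := (Real.hasDerivAt_rpow_const (x := C1 * t + C2) (p := -(1/θ)) (Or.inl hpos.ne')).comp t h2; exact this
  have h4 := h1.mul h3
  refine h4.congr_deriv ?_
  have e1 : (C1 * t + C2) ^ (-(1/θ)) = (C1 * t + C2) ^ (-(1/θ) - 1) * (C1 * t + C2) := by
    rw [← Real.rpow_add_one hpos.ne' (-(1/θ) - 1)]
    congr 1; ring
  have e2 : t ^ (1/θ) = t ^ (1/θ - 1) * t := by
    rw [← Real.rpow_add_one ht.ne' (1/θ - 1)]
    congr 1; ring
  rw [e1, e2]; ring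

lemma Faux_cont {θ C1 C2 : ℝ} (hC1 : 0 < C1) (hC2 : 0 < C2) {s : Set ℝ}
    (hs : ∀ x ∈ s, 0 < x) : ContinuousOn (Faux θ C1 C2) s :=
  fun x hx => ((hasDerivFaux hC1 hC2 (hs x hx)).continuousAt).continuousWithinAt

lemma Faux_mono {θ C1 C2 : ℝ} (hθ : 1 < θ) (hC1 : 0 < C1) (hC2 : 0 < C2)
    {s t : ℝ} (hs : 0 < s) (hst : s ≤ t) (ht : t ≤ 1) :
    Faux θ C1 C2 s ≤ Faux θ C1 C2 t := by
  have hmem : ∀ x ∈ Set.Icc s 1, 0 < x := fun x hx => lt_of_lt_of_le hs hx.1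
  have hmono : MonotoneOn (Faux θ C1 C2) (Set.Icc s 1) := by
    apply monotoneOn_of_hasDerivWithinAt_nonneg (convex_Icc s 1)
      (Faux_cont hC1 hC2 hmem)
      (f' := fun x => C1 * C2 / θ * (C1 * x + C2) ^ (-(1/θ) - 1) * (x ^ (1/θ - 1) - 1))
    · intro x hx
      rw [interior_Icc] at hx
      exact (hasDerivFaux hC1 hC2 (hs.trans hx.1)).hasDerivWithinAt
    · intro x hx
      rw [interior_Icc] at hx
      have hx0 : 0 < x := hs.trans hx.1
      have h1 : (1:ℝ) < x ^ (1/θ - 1) := by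
        rw [Real.one_lt_rpow_iff_of_pos hx0]
        right
        constructor
        · exact hx.2
        · have : 1/θ < 1 := by
            rw [div_lt_one (by linarith)]; linarith
          linarith
      have h2 : (0:ℝ) < (C1 * x + C2) ^ (-(1/θ) - 1) := by positivity
      have h3 : (0:ℝ) < C1 * C2 / θ := by positivity
      exact mul_nonneg (mul_nonneg h3.le h2.le) (by linarith)
  exact hmono ⟨le_refl s, hst.trans ht⟩ ⟨hst, ht⟩ hst

lemma Faux_anti {θ C1 C2 : ℝ} (hθ : 1 < θ) (hC1 : 0 < C1) (hC2 : 0 < C2)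
    {s t : ℝ} (hs : 1 ≤ s) (hst : s ≤ t) :
    Faux θ C1 C2 t ≤ Faux θ C1 C2 s := by
  have hmem : ∀ x ∈ Set.Icc (1:ℝ) t, 0 < x := fun x hx => lt_of_lt_of_le one_pos hx.1
  have hanti : AntitoneOn (Faux θ C1 C2) (Set.Icc (1:ℝ) t) := by
    apply antitoneOn_of_hasDerivWithinAt_nonpos (convex_Icc 1 t)
      (Faux_cont hC1 hC2 hmem)
      (f' := fun x => C1 * C2 / θ * (C1 * x + C2) ^ (-(1/θ) - 1) * (x ^ (1/θ - 1) - 1))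
    · intro x hx
      rw [interior_Icc] at hx
      exact (hasDerivFaux hC1 hC2 (one_pos.trans hx.1)).hasDerivWithinAt
    · intro x hx
      rw [interior_Icc] at hx
      have hx0 : (0:ℝ) < x := one_pos.trans hx.1
      have h1 : x ^ (1/θ - 1) < 1 := by
        apply Real.rpow_lt_one_of_one_lt_of_neg hx.1
        have : 1/θ < 1 := by rw [div_lt_one (by linarith)]; linarith
        linarith
      have h2 : (0:ℝ) < (C1 * x + C2) ^ (-(1/θ) - 1) := by positivity
      have h3 : (0:ℝ) < C1 * C2 / θ := by positivity
      exact mul_nonpos_of_nonneg_of_nonpos (mul_nonneg h3.le h2.le) (by linarith)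
  exact hanti ⟨hs, hst⟩ ⟨hs.trans hst, le_refl t⟩ hst

lemma f_eq_Faux {θ C1 C2 : ℝ} (hC1 : 0 < C1) (hC2 : 0 < C2) {t : ℝ} (ht : 0 < t) :
    f θ C1 C2 t = Faux θ C1 C2 t := by
  unfold f Faux
  have hpos : 0 < C1 * t + C2 := by positivity
  have h1 : C1 + t⁻¹ * C2 = (C1 * t + C2) / t := by
    field_simp
  have htp : (0:ℝ) < t ^ (1/θ) := Real.rpow_pos_of_pos ht _
  rw [h1, Real.div_rpow hpos.le ht.le, Real.rpow_neg ht.le (1/θ), mul_comm t C1]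
  field_simp

lemma f_pos {θ C1 C2 : ℝ} (hC1 : 0 < C1) (hC2 : 0 < C2) {t : ℝ} (ht : 0 < t) :
    0 < f θ C1 C2 t := by
  unfold f
  have h1 : 0 < C1 + t⁻¹ * C2 := by positivity
  have h2 : 0 < t * C1 + C2 := by positivity
  positivity

lemma Faux_one {θ C1 C2 : ℝ} (hS : 0 < C1 + C2) :
    Faux θ C1 C2 1 = (C1 + C2) ^ (1 - 1/θ) := by
  unfold Faux
  rw [Real.one_rpow, mul_one,
    show (1:ℝ) - 1/θ = 1 + -(1/θ) by ring, Real.rpow_add hS, Real.rpow_one]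

lemma Faux_le {θ C1 C2 : ℝ} (hθ : 1 < θ) (hC1 : 0 < C1) (hC2 : 0 < C2)
    {t : ℝ} (ht : 0 < t) : Faux θ C1 C2 t ≤ (C1 + C2) ^ (1 - 1/θ) := by
  have hS : 0 < C1 + C2 := by positivity
  rw [← Faux_one (θ := θ) hS]
  rcases le_total t 1 with hc | hc
  · exact Faux_mono hθ hC1 hC2 ht hc le_rfl
  · exact Faux_anti hθ hC1 hC2 le_rfl hc

lemma tD_pos {p θ D : ℝ} (hp0 : 0 < p) (hD0 : 0 < D) (hDp : D < 1/p) (hp1 : p < 1) :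
    0 < tD p θ D := by
  have h1 : D * p < 1 := by rwa [← lt_div_iff₀ hp0]
  have : 0 < D * (1 - p) / (1 - D * p) := by
    apply div_pos (by nlinarith) (by linarith)
  exact Real.rpow_pos_of_pos this θ

lemma tD_mono {p θ : ℝ} (hθ : 0 < θ) (hp0 : 0 < p) (hp1 : p < 1)
    {a b : ℝ} (ha : 0 < a) (hab : a ≤ b) (hb : b < 1/p) :
    tD p θ a ≤ tD p θ b := by
  have hb1 : b * p < 1 := by rwa [← lt_div_iff₀ hp0]
  have ha1 : a * p < 1 := by nlinarith
  unfold tD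
  apply Real.rpow_le_rpow
  · apply div_nonneg (by nlinarith) (by linarith)
  · rw [div_le_div_iff₀ (by linarith) (by linarith)]
    nlinarith
  · exact hθ.le

lemma tD_le_one {p θ : ℝ} (hθ : 0 < θ) (hp0 : 0 < p) (hp1 : p < 1)
    {D : ℝ} (hD0 : 0 < D) (hD1 : D ≤ 1) : tD p θ D ≤ 1 := by
  have h1 : D * p < 1 := by nlinarith
  apply Real.rpow_le_one
  · apply div_nonneg (by nlinarith) (by linarith)
  · rw [div_le_one (by linarith)]; nlinarith
  · exact hθ.le

lemma one_le_tD {p θ : ℝ} (hθ : 0 < θ) (hp0 : 0 < p) (hp1 : p < 1)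
    {D : ℝ} (hD1 : 1 ≤ D) (hDp : D < 1/p) : 1 ≤ tD p θ D := by
  have h1 : D * p < 1 := by rwa [← lt_div_iff₀ hp0]
  have hb : 1 ≤ D * (1 - p) / (1 - D * p) := by
    rw [le_div_iff₀ (by linarith)]
    nlinarith
  unfold tD
  calc (1:ℝ) = 1 ^ θ := (Real.one_rpow θ).symm
    _ ≤ _ := Real.rpow_le_rpow zero_le_one hb hθ.le

/-- The deterministic product estimate that yields the bounds on the minimal expected
performance in Proposition 4.1. -/
theorem stmt13 (p q θ : ℝ) (hp : p ∈ Set.Ioo (0 : ℝ) 1) (hq : q ∈ Set.Ioo (0 : ℝ) 1)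
    (hθ : 1 < θ) (C1 C2 δ : ℝ)
    (hC1 : C1 = p ^ θ * q ^ (1 - θ))
    (hC2 : C2 = (1 - p) ^ θ * (1 - q) ^ (1 - θ))
    (hδ : δ = (C1 + C2)⁻¹)
    (m : ℕ) (hm : 1 ≤ m) (Dd Du D : ℕ → ℝ)
    (hDd : ∀ j ∈ Finset.Icc 1 m, 0 < Dd j ∧ Dd j ≤ 1)
    (hDu : ∀ j ∈ Finset.Icc 1 m, 1 ≤ Du j ∧ Du j < 1 / p)
    (hD : ∀ j ∈ Finset.Icc 1 m, Dd j ≤ D j ∧ D j ≤ Du j) :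
    δ ^ ((m : ℝ) * (1 - 1 / θ)) *
        ∏ j ∈ Finset.Icc 1 m, min (f θ C1 C2 (tD p θ (Du j))) (f θ C1 C2 (tD p θ (Dd j)))
      ≤ ∏ j ∈ Finset.Icc 1 m, δ ^ (1 - 1 / θ) * f θ C1 C2 (tD p θ (D j)) ∧
    ∏ j ∈ Finset.Icc 1 m, δ ^ (1 - 1 / θ) * f θ C1 C2 (tD p θ (D j)) ≤ 1 := by
  obtain ⟨hp0, hp1⟩ := hp
  obtain ⟨hq0, hq1⟩ := hq
  have hC1p : 0 < C1 := by
    rw [hC1]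
    have := Real.rpow_pos_of_pos hp0 θ
    have := Real.rpow_pos_of_pos hq0 (1 - θ)
    positivity
  have hC2p : 0 < C2 := by
    rw [hC2]
    have h1 : (0:ℝ) < 1 - p := by linarith
    have h2 : (0:ℝ) < 1 - q := by linarith
    have := Real.rpow_pos_of_pos h1 θ
    have := Real.rpow_pos_of_pos h2 (1 - θ)
    positivity
  have hS : 0 < C1 + C2 := by positivity
  have hδ0 : 0 < δ := by rw [hδ]; positivity
  have hθ0 : (0:ℝ) < θ := by linarith
  have h1p : (1:ℝ) < 1/p := by rw [lt_div_iff₀ hp0]; linarith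
  have hSpow : 0 < (C1 + C2) ^ (1 - 1/θ) := Real.rpow_pos_of_pos hS _
  have hδid : δ ^ (1 - 1/θ) = ((C1 + C2) ^ (1 - 1/θ))⁻¹ := by
    rw [hδ, Real.inv_rpow hS.le]
  -- per-index facts
  have key : ∀ j ∈ Finset.Icc 1 m,
      min (f θ C1 C2 (tD p θ (Du j))) (f θ C1 C2 (tD p θ (Dd j))) ≤ f θ C1 C2 (tD p θ (D j)) ∧
      0 ≤ min (f θ C1 C2 (tD p θ (Du j))) (f θ C1 C2 (tD p θ (Dd j))) ∧
      0 ≤ f θ C1 C2 (tD p θ (D j)) ∧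
      δ ^ (1 - 1/θ) * f θ C1 C2 (tD p θ (D j)) ≤ 1 := by
    intro j hj
    obtain ⟨hd0, hd1⟩ := hDd j hj
    obtain ⟨hu1, hup⟩ := hDu j hj
    obtain ⟨hj1, hj2⟩ := hD j hj
    have hD0 : 0 < D j := lt_of_lt_of_le hd0 hj1
    have hDlt : D j < 1/p := lt_of_le_of_lt hj2 hup
    have hdlt : Dd j < 1/p := lt_of_le_of_lt hd1 h1p
    have htd : 0 < tD p θ (Dd j) := tD_pos hp0 hd0 hdlt hp1
    have htD : 0 < tD p θ (D j) := tD_pos hp0 hD0 hDlt hp1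
    have htu : 0 < tD p θ (Du j) := tD_pos hp0 (by linarith) hup hp1
    have hmin : min (f θ C1 C2 (tD p θ (Du j))) (f θ C1 C2 (tD p θ (Dd j)))
        ≤ f θ C1 C2 (tD p θ (D j)) := by
      rcases le_total (D j) 1 with hc | hc
      · refine le_trans (min_le_right _ _) ?_
        rw [f_eq_Faux hC1p hC2p htd, f_eq_Faux hC1p hC2p htD]
        exact Faux_mono hθ hC1p hC2p htd (tD_mono hθ0 hp0 hp1 hd0 hj1 hDlt)
          (tD_le_one hθ0 hp0 hp1 hD0 hc)
      · refine le_trans (min_le_left _ _) ?_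
        rw [f_eq_Faux hC1p hC2p htu, f_eq_Faux hC1p hC2p htD]
        exact Faux_anti hθ hC1p hC2p (one_le_tD hθ0 hp0 hp1 hc hDlt)
          (tD_mono hθ0 hp0 hp1 hD0 hj2 hup)
    refine ⟨hmin, le_min (f_pos hC1p hC2p htu).le (f_pos hC1p hC2p htd).le,
      (f_pos hC1p hC2p htD).le, ?_⟩
    have hb : f θ C1 C2 (tD p θ (D j)) ≤ (C1 + C2) ^ (1 - 1/θ) := by
      rw [f_eq_Faux hC1p hC2p htD]
      exact Faux_le hθ hC1p hC2p htD
    calc δ ^ (1 - 1/θ) * f θ C1 C2 (tD p θ (D j))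
        ≤ δ ^ (1 - 1/θ) * (C1 + C2) ^ (1 - 1/θ) :=
          mul_le_mul_of_nonneg_left hb (Real.rpow_nonneg hδ0.le _)
      _ = 1 := by rw [hδid, inv_mul_cancel₀ hSpow.ne']
  constructor
  · have hpow : δ ^ ((m : ℝ) * (1 - 1/θ)) = ∏ _j ∈ Finset.Icc 1 m, δ ^ (1 - 1/θ) := by
      rw [Finset.prod_const, Nat.card_Icc, mul_comm, Real.rpow_mul hδ0.le,
        Real.rpow_natCast]
      norm_num
    rw [hpow, ← Finset.prod_mul_distrib]
    apply Finset.prod_le_prod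
    · intro j hj
      exact mul_nonneg (Real.rpow_nonneg hδ0.le _) (key j hj).2.1
    · intro j hj
      exact mul_le_mul_of_nonneg_left (key j hj).1 (Real.rpow_nonneg hδ0.le _)
  · apply Finset.prod_le_one
    · intro j hj
      exact mul_nonneg (Real.rpow_nonneg hδ0.le _) (key j hj).2.2.1
    · intro j hj
      exact (key j hj).2.2.2
end

section
/- Let α ∈ (0,1], β > 0 (in the paper β = 1 − 1/θ with θ > 1), and let (g_j)_{j≥1} be positive real numbers. For natural numbers m, T with m dividing T, define MEP(m,T) = α^{β·(T/m − 1)}·(∏_{j=1}^m g_j)^{T/m}. Then for any divisors m₁, m₂ of T: MEP(m₁,T) ≥ MEP(m₂,T) if and only if (α^β·∏_{j=1}^{m₁} g_j)^{1/m₁} ≥ (α^β·∏_{j=1}^{m₂} g_j)^{1/m₂}. In particular, the maximizer of the minimal expected performance over interaction schedules m dividing T coincides with the maximizer of m ↦ (α^β·∏_{j=1}^{m} g_j)^{1/m} and is therefore independent of the evaluation horizon T. (Proposition 4.2.) -/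
lemma stmt14_aux (α β : ℝ) (hα0 : 0 < α) (g : ℕ → ℝ)
    (hg : ∀ j, 1 ≤ j → 0 < g j) (T : ℕ) (m : ℕ) (hm : 0 < m) (hdvd : m ∣ T) :
    α ^ (β * (((T / m : ℕ) : ℝ) - 1)) * (∏ j ∈ Finset.Icc 1 m, g j) ^ (T / m)
      = α ^ (-β) * ((α ^ β * ∏ j ∈ Finset.Icc 1 m, g j) ^ ((1 : ℝ) / m)) ^ T := by
  have hP : 0 < ∏ j ∈ Finset.Icc 1 m, g j :=
    Finset.prod_pos fun j hj => hg j (Finset.mem_Icc.mp hj).1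
  have hA : 0 < α ^ β * ∏ j ∈ Finset.Icc 1 m, g j :=
    mul_pos (Real.rpow_pos_of_pos hα0 β) hP
  set A := α ^ β * ∏ j ∈ Finset.Icc 1 m, g j with hAdef
  have hmR : (m : ℝ) ≠ 0 := Nat.cast_ne_zero.mpr hm.ne'
  have hcast : ((T / m : ℕ) : ℝ) = (T : ℝ) / m := by
    rw [Nat.cast_div hdvd hmR]
  have h1 : (A ^ ((1 : ℝ) / m)) ^ T = A ^ (T / m : ℕ) := by
    rw [← Real.rpow_natCast (A ^ ((1:ℝ)/m)) T, ← Real.rpow_mul hA.le,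
      ← Real.rpow_natCast A (T / m), hcast]
    ring_nf
  rw [h1, hAdef, mul_pow, ← Real.rpow_natCast (α ^ β) (T/m), ← Real.rpow_mul hα0.le]
  rw [mul_sub, mul_one, Real.rpow_sub hα0, Real.rpow_neg hα0.le β, mul_comm β]
  ring

/-- Proposition 4.2: the optimal interaction schedule is independent of the evaluation
horizon `T`. -/
theorem stmt14 (α β : ℝ) (hα : α ∈ Set.Ioc (0 : ℝ) 1) (hβ : 0 < β)
    (g : ℕ → ℝ) (hg : ∀ j, 1 ≤ j → 0 < g j)
    (T : ℕ) (hT : 0 < T)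
    (MEP : ℕ → ℕ → ℝ)
    (hMEP : ∀ m, 0 < m → m ∣ T →
      MEP m T = α ^ (β * (((T / m : ℕ) : ℝ) - 1)) * (∏ j ∈ Finset.Icc 1 m, g j) ^ (T / m)) :
    (∀ m₁ m₂ : ℕ, 0 < m₁ → m₁ ∣ T → 0 < m₂ → m₂ ∣ T →
      (MEP m₂ T ≤ MEP m₁ T ↔
        (α ^ β * ∏ j ∈ Finset.Icc 1 m₂, g j) ^ ((1 : ℝ) / m₂) ≤
          (α ^ β * ∏ j ∈ Finset.Icc 1 m₁, g j) ^ ((1 : ℝ) / m₁))) ∧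
    (∀ mstar : ℕ, 0 < mstar → mstar ∣ T →
      ((∀ m : ℕ, 0 < m → m ∣ T → MEP m T ≤ MEP mstar T) ↔
        (∀ m : ℕ, 0 < m → m ∣ T →
          (α ^ β * ∏ j ∈ Finset.Icc 1 m, g j) ^ ((1 : ℝ) / m) ≤
            (α ^ β * ∏ j ∈ Finset.Icc 1 mstar, g j) ^ ((1 : ℝ) / mstar)))) := by
  obtain ⟨hα0, hα1⟩ := hα
  have key : ∀ m₁ m₂ : ℕ, 0 < m₁ → m₁ ∣ T → 0 < m₂ → m₂ ∣ T →
      (MEP m₂ T ≤ MEP m₁ T ↔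
        (α ^ β * ∏ j ∈ Finset.Icc 1 m₂, g j) ^ ((1 : ℝ) / m₂) ≤
          (α ^ β * ∏ j ∈ Finset.Icc 1 m₁, g j) ^ ((1 : ℝ) / m₁)) := by
    intro m₁ m₂ h₁ hd₁ h₂ hd₂
    have hP : ∀ m : ℕ, 0 < ∏ j ∈ Finset.Icc 1 m, g j :=
      fun m => Finset.prod_pos fun j hj => hg j (Finset.mem_Icc.mp hj).1
    have hA : ∀ m : ℕ, 0 < α ^ β * ∏ j ∈ Finset.Icc 1 m, g j :=
      fun m => mul_pos (Real.rpow_pos_of_pos hα0 β) (hP m)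
    rw [hMEP m₁ h₁ hd₁, hMEP m₂ h₂ hd₂,
      stmt14_aux α β hα0 g hg T m₁ h₁ hd₁, stmt14_aux α β hα0 g hg T m₂ h₂ hd₂,
      mul_le_mul_iff_of_pos_left (Real.rpow_pos_of_pos hα0 (-β))]
    constructor
    · intro h
      exact le_of_pow_le_pow_left₀ hT.ne'
        (Real.rpow_nonneg (hA m₁).le _) h
    · intro h
      exact pow_le_pow_left₀ (Real.rpow_nonneg (hA m₂).le _) h T
  refine ⟨key, fun mstar hms hdms => ?_⟩
  constructor
  · intro h m hm hd
    exact (key mstar m hms hdms hm hd).mp (h m hm hd)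
  · intro h m hm hd
    exact (key mstar m hms hdms hm hd).mpr (h m hm hd)
end

section
/- Let q ∈ (0,1) and p̃ ∈ (0,1). Then the map θ̃ ↦ G(p̃, θ̃) is differentiable on (0,∞) with partial derivative ∂G/∂θ̃ (p̃, θ̃) = (p̃/q)^{θ̃}·((1−p̃)/(1−q))^{θ̃}·(ln(p̃/q) − ln((1−p̃)/(1−q))) / (q·(p̃/q)^{θ̃} + (1−q)·((1−p̃)/(1−q))^{θ̃})², which is strictly positive when p̃ > q and strictly negative when p̃ < q; in particular G(p̃, ·) is strictly increasing in θ̃ when p̃ > q and strictly decreasing in θ̃ when p̃ < q. (Part of Proposition 5.1.) -/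
/-!
With `a = p̃/q` and `b = (1-p̃)/(1-q)` one has `G(p̃, θ̃) = (aᶿ - bᶿ)/(q aᶿ + (1-q) bᶿ)`.
By the quotient rule the numerator of the derivative collapses to `aᶿ bᶿ (log a - log b)`,
whose sign is that of `a - b`, i.e. of `p̃ - q`, for every real `θ̃`.
-/

/-- `G(p̃, θ̃) = (q^{−θ̃}p̃^{θ̃} − (1−q)^{−θ̃}(1−p̃)^{θ̃}) / (q^{1−θ̃}p̃^{θ̃} + (1−q)^{1−θ̃}(1−p̃)^{θ̃})`. -/
noncomputable def G (q pt tt : ℝ) : ℝ :=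
  (q ^ (-tt) * pt ^ tt - (1 - q) ^ (-tt) * (1 - pt) ^ tt) /
    (q ^ (1 - tt) * pt ^ tt + (1 - q) ^ (1 - tt) * (1 - pt) ^ tt)

open Real

theorem rpow_neg_mul_rpow {c p : ℝ} (hc : 0 < c) (hp : 0 ≤ p) (x : ℝ) :
    c ^ (-x) * p ^ x = (p / c) ^ x := by
  rw [div_rpow hp hc.le, rpow_neg hc.le, div_eq_inv_mul]

theorem rpow_one_sub_mul_rpow {c p : ℝ} (hc : 0 < c) (hp : 0 ≤ p) (x : ℝ) :
    c ^ (1 - x) * p ^ x = c * (p / c) ^ x := by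
  rw [sub_eq_add_neg, rpow_add hc, rpow_one, mul_assoc, rpow_neg_mul_rpow hc hp]

theorem G_eq {q pt : ℝ} (hq0 : 0 < q) (hq1 : q < 1) (hp0 : 0 ≤ pt) (hp1 : pt ≤ 1) (x : ℝ) :
    G q pt x = ((pt / q) ^ x - ((1 - pt) / (1 - q)) ^ x) /
      (q * (pt / q) ^ x + (1 - q) * ((1 - pt) / (1 - q)) ^ x) := by
  have hq1' : 0 < 1 - q := sub_pos.2 hq1
  have hp1' : 0 ≤ 1 - pt := sub_nonneg.2 hp1
  rw [G, rpow_neg_mul_rpow hq0 hp0, rpow_neg_mul_rpow hq1' hp1',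
    rpow_one_sub_mul_rpow hq0 hp0, rpow_one_sub_mul_rpow hq1' hp1']

theorem hasDerivAt_rpow_sub_rpow_div {a b : ℝ} (ha : 0 < a) (hb : 0 < b) (c d x : ℝ)
    (hden : c * a ^ x + d * b ^ x ≠ 0) :
    HasDerivAt (fun x => (a ^ x - b ^ x) / (c * a ^ x + d * b ^ x))
      ((c + d) * a ^ x * b ^ x * (log a - log b) / (c * a ^ x + d * b ^ x) ^ 2) x := by
  have hA := (hasStrictDerivAt_const_rpow ha x).hasDerivAt
  have hB := (hasStrictDerivAt_const_rpow hb x).hasDerivAt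
  refine ((hA.sub hB).div ((hA.const_mul c).add (hB.const_mul d)) hden).congr_deriv ?_
  simp only [Pi.add_apply, Pi.sub_apply]
  field_simp
  ring

theorem one_sub_div_one_sub_lt_div_iff {q pt : ℝ} (hq0 : 0 < q) (hq1 : q < 1) :
    (1 - pt) / (1 - q) < pt / q ↔ q < pt := by
  rw [div_lt_div_iff₀ (sub_pos.2 hq1) hq0]
  constructor <;> intro h <;> linarith

theorem div_lt_one_sub_div_one_sub_iff {q pt : ℝ} (hq0 : 0 < q) (hq1 : q < 1) :
    pt / q < (1 - pt) / (1 - q) ↔ pt < q := by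
  rw [div_lt_div_iff₀ hq0 (sub_pos.2 hq1)]
  constructor <;> intro h <;> linarith

theorem rpow_mul_rpow_mul_log_sub_div_sq_pos {a b s : ℝ} (hb : 0 < b) (hab : b < a)
    (hs : s ≠ 0) (x : ℝ) : 0 < a ^ x * b ^ x * (log a - log b) / s ^ 2 := by
  have ha : 0 < a := hb.trans hab
  exact div_pos (mul_pos (by positivity) (sub_pos.2 (log_lt_log hb hab))) (by positivity)

theorem rpow_mul_rpow_mul_log_sub_div_sq_neg {a b s : ℝ} (ha : 0 < a) (hab : a < b)
    (hs : s ≠ 0) (x : ℝ) : a ^ x * b ^ x * (log a - log b) / s ^ 2 < 0 := by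
  have hb : 0 < b := ha.trans hab
  exact div_neg_of_neg_of_pos (mul_neg_of_pos_of_neg (by positivity)
    (sub_neg.2 (log_lt_log ha hab))) (by positivity)

/-- Part of Proposition 5.1: monotonicity of `G` in its second argument. -/
theorem stmt17 (q pt : ℝ) (hq : q ∈ Set.Ioo (0 : ℝ) 1) (hpt : pt ∈ Set.Ioo (0 : ℝ) 1) :
    (∀ θt > (0 : ℝ),
      HasDerivAt (fun x => G q pt x)
        ((pt / q) ^ θt * ((1 - pt) / (1 - q)) ^ θt *
            (Real.log (pt / q) - Real.log ((1 - pt) / (1 - q))) /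
          (q * (pt / q) ^ θt + (1 - q) * ((1 - pt) / (1 - q)) ^ θt) ^ 2) θt ∧
      (q < pt →
        0 < (pt / q) ^ θt * ((1 - pt) / (1 - q)) ^ θt *
              (Real.log (pt / q) - Real.log ((1 - pt) / (1 - q))) /
            (q * (pt / q) ^ θt + (1 - q) * ((1 - pt) / (1 - q)) ^ θt) ^ 2) ∧
      (pt < q →
        (pt / q) ^ θt * ((1 - pt) / (1 - q)) ^ θt *
              (Real.log (pt / q) - Real.log ((1 - pt) / (1 - q))) /
            (q * (pt / q) ^ θt + (1 - q) * ((1 - pt) / (1 - q)) ^ θt) ^ 2 < 0)) ∧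
    (q < pt → StrictMonoOn (fun θt => G q pt θt) (Set.Ioi 0)) ∧
    (pt < q → StrictAntiOn (fun θt => G q pt θt) (Set.Ioi 0)) := by
  obtain ⟨hq0, hq1⟩ := hq
  obtain ⟨hp0, hp1⟩ := hpt
  have ha : 0 < pt / q := div_pos hp0 hq0
  have hb : 0 < (1 - pt) / (1 - q) := div_pos (sub_pos.2 hp1) (sub_pos.2 hq1)
  have hden (x : ℝ) : q * (pt / q) ^ x + (1 - q) * ((1 - pt) / (1 - q)) ^ x ≠ 0 :=
    (add_pos (mul_pos hq0 (rpow_pos_of_pos ha x))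
      (mul_pos (sub_pos.2 hq1) (rpow_pos_of_pos hb x))).ne'
  have hderiv (x : ℝ) := by
    have h := hasDerivAt_rpow_sub_rpow_div ha hb q (1 - q) x (hden x)
    rw [add_sub_cancel, one_mul] at h
    exact h.congr_of_eventuallyEq (.of_forall (G_eq hq0 hq1 hp0.le hp1.le))
  have hpos (h : q < pt) (x : ℝ) := rpow_mul_rpow_mul_log_sub_div_sq_pos hb
    ((one_sub_div_one_sub_lt_div_iff hq0 hq1).2 h) (hden x) x
  have hneg (h : pt < q) (x : ℝ) := rpow_mul_rpow_mul_log_sub_div_sq_neg ha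
    ((div_lt_one_sub_div_one_sub_iff hq0 hq1).2 h) (hden x) x
  exact ⟨fun x _ => ⟨hderiv x, fun h => hpos h x, fun h => hneg h x⟩,
    fun h => (strictMono_of_hasDerivAt_pos hderiv (hpos h)).strictMonoOn _,
    fun h => (strictAnti_of_hasDerivAt_neg hderiv (hneg h)).strictAntiOn _⟩
end

section
/- Let p, q ∈ (0,1), θ > 0, and let 0 < D_d ≤ 1 ≤ D_u with D_u·p < 1, D_d·p ≠ q, D_u·p ≠ q, and 0 < E_d ≤ 1 ≤ E_u. Set G₀ = G(p, θ), θ_u* = E_u·θ if D_u·p > q and θ_u* = E_d·θ if D_u·p < q, and θ_d* = E_d·θ if D_d·p > q and θ_d* = E_u·θ if D_d·p < q. Then the maximum of |G(D·p, E·θ) − G₀| over (D, E) ∈ [D_d, D_u] × [E_d, E_u] is attained and equals max{ G(D_u·p, θ_u*) − G₀, G₀ − G(D_d·p, θ_d*) }. (The deterministic maximization formula giving the essential supremum of the deviation between the ideal and the implemented robo-advising strategies in Proposition 5.1, up to the factor x/(u−d).) -/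
namespace Stmt18Aux

noncomputable def L (q pt : ℝ) : ℝ := pt * (1 - q) / (q * (1 - pt))

noncomputable def h (q t : ℝ) : ℝ := (t - 1) / (q * t + (1 - q))

lemma L_pos {q pt : ℝ} (hq0 : 0 < q) (hq1 : q < 1) (hp0 : 0 < pt) (hp1 : pt < 1) :
    0 < L q pt := by
  have hq' : 0 < 1 - q := by linarith
  have hp' : 0 < 1 - pt := by linarith
  exact div_pos (mul_pos hp0 hq') (mul_pos hq0 hp')

lemma Gkey {q pt : ℝ} (hq0 : 0 < q) (hq1 : q < 1) (hp0 : 0 < pt) (hp1 : pt < 1) (tt : ℝ) :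
    G q pt tt = h q ((L q pt) ^ tt) := by
  have hq' : 0 < 1 - q := by linarith
  have hp' : 0 < 1 - pt := by linarith
  have hQ : 0 < q ^ tt := Real.rpow_pos_of_pos hq0 tt
  have hR : 0 < (1 - q) ^ tt := Real.rpow_pos_of_pos hq' tt
  have hA : 0 < pt ^ tt := Real.rpow_pos_of_pos hp0 tt
  have hB : 0 < (1 - pt) ^ tt := Real.rpow_pos_of_pos hp' tt
  have hL : L q pt ^ tt = pt ^ tt * (1 - q) ^ tt / (q ^ tt * (1 - pt) ^ tt) := by
    rw [L, Real.div_rpow (by positivity) (mul_pos hq0 hp').le,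
      Real.mul_rpow hp0.le hq'.le, Real.mul_rpow hq0.le hp'.le]
  have e1 : q ^ (-tt) = (q ^ tt)⁻¹ := Real.rpow_neg hq0.le tt
  have e2 : (1 - q) ^ (-tt) = ((1 - q) ^ tt)⁻¹ := Real.rpow_neg hq'.le tt
  have e3 : q ^ (1 - tt) = q / q ^ tt := by
    rw [Real.rpow_sub hq0, Real.rpow_one]
  have e4 : (1 - q) ^ (1 - tt) = (1 - q) / (1 - q) ^ tt := by
    rw [Real.rpow_sub hq', Real.rpow_one]
  rw [G, h, hL, e1, e2, e3, e4]
  have d1 : q / q ^ tt * pt ^ tt + (1 - q) / (1 - q) ^ tt * (1 - pt) ^ tt ≠ 0 := by positivity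
  have d2 : q * (pt ^ tt * (1 - q) ^ tt / (q ^ tt * (1 - pt) ^ tt)) + (1 - q) ≠ 0 := by
    positivity
  rw [div_eq_div_iff d1 d2]
  field_simp

lemma h_mono {q t₁ t₂ : ℝ} (hq0 : 0 < q) (hq1 : q < 1) (h1 : 0 ≤ t₁) (h12 : t₁ ≤ t₂) :
    h q t₁ ≤ h q t₂ := by
  have d1 : 0 < q * t₁ + (1 - q) := by nlinarith
  have d2 : 0 < q * t₂ + (1 - q) := by nlinarith
  rw [h, h, div_le_div_iff₀ d1 d2]
  nlinarith

lemma G_mono_pt {q p₁ p₂ tt : ℝ} (hq0 : 0 < q) (hq1 : q < 1) (h0 : 0 < p₁) (h12 : p₁ ≤ p₂)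
    (h1 : p₂ < 1) (ht : 0 ≤ tt) : G q p₁ tt ≤ G q p₂ tt := by
  have hp₁1 : p₁ < 1 := lt_of_le_of_lt h12 h1
  have hp₂0 : 0 < p₂ := lt_of_lt_of_le h0 h12
  have hq' : 0 < 1 - q := by linarith
  have hp₁' : 0 < 1 - p₁ := by linarith
  have hp₂' : 0 < 1 - p₂ := by linarith
  rw [Gkey hq0 hq1 h0 hp₁1 tt, Gkey hq0 hq1 hp₂0 h1 tt]
  apply h_mono hq0 hq1 (Real.rpow_nonneg (L_pos hq0 hq1 h0 hp₁1).le tt)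
  apply Real.rpow_le_rpow (L_pos hq0 hq1 h0 hp₁1).le _ ht
  rw [L, L, div_le_div_iff₀ (mul_pos hq0 hp₁') (mul_pos hq0 hp₂')]
  nlinarith [mul_nonneg (mul_nonneg hq0.le hq'.le) (sub_nonneg.2 h12)]

lemma G_mono_tt_of_ge {q pt t₁ t₂ : ℝ} (hq0 : 0 < q) (hq1 : q < 1) (hp0 : 0 < pt)
    (hp1 : pt < 1) (hqp : q ≤ pt) (h12 : t₁ ≤ t₂) : G q pt t₁ ≤ G q pt t₂ := by
  have hp' : 0 < 1 - pt := by linarith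
  rw [Gkey hq0 hq1 hp0 hp1, Gkey hq0 hq1 hp0 hp1]
  apply h_mono hq0 hq1 (Real.rpow_nonneg (L_pos hq0 hq1 hp0 hp1).le t₁)
  apply Real.rpow_le_rpow_of_exponent_le _ h12
  rw [L, le_div_iff₀ (mul_pos hq0 hp')]
  nlinarith

lemma G_anti_tt_of_le {q pt t₁ t₂ : ℝ} (hq0 : 0 < q) (hq1 : q < 1) (hp0 : 0 < pt)
    (hp1 : pt < 1) (hqp : pt ≤ q) (h12 : t₁ ≤ t₂) : G q pt t₂ ≤ G q pt t₁ := by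
  have hp' : 0 < 1 - pt := by linarith
  rw [Gkey hq0 hq1 hp0 hp1, Gkey hq0 hq1 hp0 hp1]
  apply h_mono hq0 hq1 (Real.rpow_nonneg (L_pos hq0 hq1 hp0 hp1).le t₂)
  apply Real.rpow_le_rpow_of_exponent_ge (L_pos hq0 hq1 hp0 hp1) _ h12
  rw [L, div_le_one (mul_pos hq0 hp')]
  nlinarith

end Stmt18Aux

open Stmt18Aux in
/-- The deterministic maximization formula giving the essential supremum of the deviation
between the ideal and the implemented robo-advising strategies in Proposition 5.1,
up to the factor `x/(u−d)`. -/
theorem stmt18 (p q θ : ℝ) (hp : p ∈ Set.Ioo (0 : ℝ) 1) (hq : q ∈ Set.Ioo (0 : ℝ) 1)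
    (hθ : 0 < θ) (Dd Du Ed Eu : ℝ)
    (hDd0 : 0 < Dd) (hDd1 : Dd ≤ 1) (hDu1 : 1 ≤ Du) (hDup : Du * p < 1)
    (hDdq : Dd * p ≠ q) (hDuq : Du * p ≠ q)
    (hEd0 : 0 < Ed) (hEd1 : Ed ≤ 1) (hEu1 : 1 ≤ Eu) :
    IsGreatest
      {v : ℝ | ∃ D ∈ Set.Icc Dd Du, ∃ E ∈ Set.Icc Ed Eu, v = |G q (D * p) (E * θ) - G q p θ|}
      (max (G q (Du * p) (if q < Du * p then Eu * θ else Ed * θ) - G q p θ)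
        (G q p θ - G q (Dd * p) (if q < Dd * p then Ed * θ else Eu * θ))) := by
  obtain ⟨hp0, hp1⟩ := hp
  obtain ⟨hq0, hq1⟩ := hq
  have hDdp0 : 0 < Dd * p := mul_pos hDd0 hp0
  have hDdp1 : Dd * p < 1 := lt_of_le_of_lt (by nlinarith) hp1
  have hDup0 : 0 < Du * p := mul_pos (lt_of_lt_of_le one_pos hDu1) hp0
  -- key sandwich bound
  have key : ∀ D ∈ Set.Icc Dd Du, ∀ E ∈ Set.Icc Ed Eu,
      G q (Dd * p) (if q < Dd * p then Ed * θ else Eu * θ) ≤ G q (D * p) (E * θ) ∧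
      G q (D * p) (E * θ) ≤ G q (Du * p) (if q < Du * p then Eu * θ else Ed * θ) := by
    rintro D ⟨hD1, hD2⟩ E ⟨hE1, hE2⟩
    have hDp0 : 0 < D * p := mul_pos (lt_of_lt_of_le hDd0 hD1) hp0
    have hDp1 : D * p < 1 := lt_of_le_of_lt (by nlinarith) hDup
    have hDdD : Dd * p ≤ D * p := by nlinarith
    have hDDu : D * p ≤ Du * p := by nlinarith
    have hEθ1 : Ed * θ ≤ E * θ := by nlinarith
    have hEθ2 : E * θ ≤ Eu * θ := by nlinarith
    constructor
    · have h2 : G q (Dd * p) (E * θ) ≤ G q (D * p) (E * θ) :=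
        G_mono_pt hq0 hq1 hDdp0 hDdD hDp1 (by nlinarith)
      refine le_trans ?_ h2
      split_ifs with hc
      · exact G_mono_tt_of_ge hq0 hq1 hDdp0 hDdp1 hc.le hEθ1
      · have : Dd * p ≤ q := le_of_not_gt hc
        exact G_anti_tt_of_le hq0 hq1 hDdp0 hDdp1 this hEθ2
    · have h2 : G q (D * p) (E * θ) ≤ G q (Du * p) (E * θ) :=
        G_mono_pt hq0 hq1 hDp0 hDDu hDup (by nlinarith)
      refine h2.trans ?_
      split_ifs with hc
      · exact G_mono_tt_of_ge hq0 hq1 hDup0 hDup hc.le hEθ2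
      · have : Du * p ≤ q := le_of_not_gt hc
        exact G_anti_tt_of_le hq0 hq1 hDup0 hDup this hEθ1
  have h1mem : (1 : ℝ) ∈ Set.Icc Dd Du := ⟨hDd1, hDu1⟩
  have h1mem' : (1 : ℝ) ∈ Set.Icc Ed Eu := ⟨hEd1, hEu1⟩
  have hG0 := key 1 h1mem 1 h1mem'
  rw [one_mul, one_mul] at hG0
  obtain ⟨hG0l, hG0u⟩ := hG0
  constructor
  · -- membership
    have memA : (G q (Du * p) (if q < Du * p then Eu * θ else Ed * θ) - G q p θ) ∈
        {v : ℝ | ∃ D ∈ Set.Icc Dd Du, ∃ E ∈ Set.Icc Ed Eu,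
          v = |G q (D * p) (E * θ) - G q p θ|} := by
      by_cases hc : q < Du * p
      · rw [if_pos hc] at hG0u ⊢
        exact ⟨Du, ⟨hDd1.trans hDu1, le_refl _⟩, Eu, ⟨hEd1.trans hEu1, le_refl _⟩,
          (abs_of_nonneg (by linarith)).symm⟩
      · rw [if_neg hc] at hG0u ⊢
        exact ⟨Du, ⟨hDd1.trans hDu1, le_refl _⟩, Ed, ⟨le_refl _, hEd1.trans hEu1⟩,
          (abs_of_nonneg (by linarith)).symm⟩
    have memB : (G q p θ - G q (Dd * p) (if q < Dd * p then Ed * θ else Eu * θ)) ∈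
        {v : ℝ | ∃ D ∈ Set.Icc Dd Du, ∃ E ∈ Set.Icc Ed Eu,
          v = |G q (D * p) (E * θ) - G q p θ|} := by
      by_cases hc : q < Dd * p
      · rw [if_pos hc] at hG0l ⊢
        refine ⟨Dd, ⟨le_refl _, hDd1.trans hDu1⟩, Ed, ⟨le_refl _, hEd1.trans hEu1⟩, ?_⟩
        rw [abs_sub_comm, abs_of_nonneg (by linarith)]
      · rw [if_neg hc] at hG0l ⊢
        refine ⟨Dd, ⟨le_refl _, hDd1.trans hDu1⟩, Eu, ⟨hEd1.trans hEu1, le_refl _⟩, ?_⟩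
        rw [abs_sub_comm, abs_of_nonneg (by linarith)]
    rcases le_total (G q (Du * p) (if q < Du * p then Eu * θ else Ed * θ) - G q p θ)
      (G q p θ - G q (Dd * p) (if q < Dd * p then Ed * θ else Eu * θ)) with hab | hab
    · rw [max_eq_right hab]; exact memB
    · rw [max_eq_left hab]; exact memA
  · -- upper bound
    rintro v ⟨D, hD, E, hE, rfl⟩
    obtain ⟨hl, hu⟩ := key D hD E hE
    have hmA := le_max_left (G q (Du * p) (if q < Du * p then Eu * θ else Ed * θ) - G q p θ)
      (G q p θ - G q (Dd * p) (if q < Dd * p then Ed * θ else Eu * θ))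
    have hmB := le_max_right (G q (Du * p) (if q < Du * p then Eu * θ else Ed * θ) - G q p θ)
      (G q p θ - G q (Dd * p) (if q < Dd * p then Ed * θ else Eu * θ))
    rw [abs_le]
    exact ⟨by linarith, by linarith⟩
end
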